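/- arXiv:2202.06152 — 8 statements merged into one kernel-verified Lean document; each statement's English description precedes it below -/
import Mathlib

section
/- For any vectors μ_1, …, μ_T, μ ∈ ℝ^m, the following identity holds: ∑_{t=1}^T g_t^⊤(μ_t − μ) = ∑_{t=1}^T a_t z_t^⊤(μ_t − μ) − ∑_{s=1}^T ∑_{t=s+1}^T b_{t,s} g_s^⊤(μ_t − μ_{t−1}), where b_{t,s} := ∑_{j=t}^T a_j λ_{j−s}. -/
/-!
Expanding `z_t` and swapping the sums turns `∑_t a_t ⟨z_t, μ_t - μ̄⟩` into
`∑_s ∑_{t ≥ s} a_t λ_{t-s} ⟨g_s, μ_t - μ̄⟩`. As `a_t λ_{t-s} = b_{t,s} - b_{t+1,s}` with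
`b_{T+1,s} = 0`, summation by parts in `t` rewrites the inner sum as
`b_{s,s} ⟨g_s, μ_s - μ̄⟩ + ∑_{t > s} b_{t,s} ⟨g_s, μ_t - μ_{t-1}⟩`, and
`b_{s,s} = ∑_{k ≤ T-s} (q_0 + ⋯ + q_{T-s-k}) λ_k = ∑_{n ≤ T-s} (λ * q)_n = 1`
because `q` is the convolution inverse of `λ`.
-/

open Finset

theorem sum_range_sum_range_sub_mul_eq_one {R : Type*} [CommSemiring R] {lam q : ℕ → R} {N : ℕ}
    (hq : ∀ k < N, ∑ i ∈ range (k + 1), lam i * q (k - i) = if k = 0 then 1 else 0)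
    (hN : 0 < N) :
    ∑ k ∈ range N, (∑ i ∈ range (N - k), q i) * lam k = 1 := by
  calc ∑ k ∈ range N, (∑ i ∈ range (N - k), q i) * lam k
      = ∑ n ∈ range N, ∑ k ∈ range (n + 1), lam k * q (n - k) := by
        rw [sum_range_diag_flip N fun k i => lam k * q i]
        exact sum_congr rfl fun k _ => by
          rw [sum_mul]; exact sum_congr rfl fun _ _ => mul_comm _ _
    _ = ∑ n ∈ range N, if n = 0 then 1 else 0 := sum_congr rfl fun n hn => hq n (mem_range.1 hn)
    _ = 1 := by simp [hN]

theorem sum_Icc_mul_sub_eq_one {R : Type*} [CommSemiring R] {lam q a : ℕ → R} {s T : ℕ}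
    (hq : ∀ k < T, ∑ i ∈ range (k + 1), lam i * q (k - i) = if k = 0 then 1 else 0)
    (ha : ∀ t ∈ Icc s T, a t = ∑ i ∈ range (T - t + 1), q i) (hs : 1 ≤ s) (hsT : s ≤ T) :
    ∑ j ∈ Icc s T, a j * lam (j - s) = 1 := by
  rw [← Ico_add_one_right_eq_Icc, sum_Ico_eq_sum_range]
  calc ∑ k ∈ range (T + 1 - s), a (s + k) * lam (s + k - s)
      = ∑ k ∈ range (T + 1 - s), (∑ i ∈ range (T + 1 - s - k), q i) * lam k := by
        refine sum_congr rfl fun k hk => ?_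
        rw [mem_range] at hk
        rw [ha _ (mem_Icc.2 ⟨by omega, by omega⟩), add_tsub_cancel_left,
          show T - (s + k) + 1 = T + 1 - s - k by omega]
    _ = 1 := sum_range_sum_range_sub_mul_eq_one (fun k hk => hq k (by omega)) (by omega)

section

variable {R M : Type*} [Ring R] [AddCommGroup M] [Module R M]

theorem sum_Icc_by_parts (B : ℕ → R) (P : ℕ → M) {s T : ℕ} (hsT : s ≤ T) :
    ∑ t ∈ Icc s T, (B t - B (t + 1)) • P t
      = B s • P s - B (T + 1) • P T + ∑ t ∈ Icc (s + 1) T, B t • (P t - P (t - 1)) := by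
  induction T, hsT using Nat.le_induction with
  | base => simp [sub_smul]
  | succ T hsT ih =>
    rw [sum_Icc_succ_top (by omega), ih, sum_Icc_succ_top (by omega), add_tsub_cancel_right]
    simp only [smul_sub, sub_smul]
    abel

theorem sum_Icc_smul_sum_Icc_smul_eq (a lam : ℕ → R) (P : ℕ → ℕ → M) (T : ℕ)
    (hdiag : ∀ s ∈ Icc 1 T, ∑ j ∈ Icc s T, a j * lam (j - s) = 1) :
    ∑ t ∈ Icc 1 T, a t • ∑ s ∈ Icc 1 t, lam (t - s) • P s t
      = ∑ s ∈ Icc 1 T, P s s + ∑ s ∈ Icc 1 T, ∑ t ∈ Icc (s + 1) T,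
          (∑ j ∈ Icc t T, a j * lam (j - s)) • (P s t - P s (t - 1)) := by
  rw [← sum_add_distrib]
  calc ∑ t ∈ Icc 1 T, a t • ∑ s ∈ Icc 1 t, lam (t - s) • P s t
      = ∑ s ∈ Icc 1 T, ∑ t ∈ Icc s T, (a t * lam (t - s)) • P s t := by
        simp only [smul_sum, mul_smul]
        exact sum_comm' fun t s => by simp only [mem_Icc]; omega
    _ = _ := sum_congr rfl fun s hs => by
        obtain ⟨hs1, hsT⟩ := mem_Icc.1 hs
        set B := fun t => ∑ j ∈ Icc t T, a j * lam (j - s)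
        have hstep : ∀ t ∈ Icc s T, a t * lam (t - s) = B t - B (t + 1) := fun t ht => by
          simp only [B, ← add_sum_Ioc_eq_sum_Icc (mem_Icc.1 ht).2, Icc_add_one_left_eq_Ioc]
          abel
        rw [sum_congr rfl fun t ht => by rw [hstep t ht], sum_Icc_by_parts B _ hsT,
          show B s = 1 from hdiag s hs, show B (T + 1) = 0 by simp [B]]
        simp [B]

end

theorem cmd_regret_decomposition_general (m T : ℕ)
    (g : ℕ → Fin m → ℝ) (lam q : ℕ → ℝ)
    (hq : ∀ k < T, ∑ i ∈ Finset.range (k + 1), lam i * q (k - i) =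
      if k = 0 then 1 else 0)
    (z : ℕ → Fin m → ℝ)
    (hz : ∀ t ∈ Finset.Icc 1 T, z t = ∑ s ∈ Finset.Icc 1 t, lam (t - s) • g s)
    (a : ℕ → ℝ)
    (ha : ∀ t ∈ Finset.Icc 1 T, a t = ∑ i ∈ Finset.range (T - t + 1), q i)
    (μ : ℕ → Fin m → ℝ) (μbar : Fin m → ℝ) :
    ∑ t ∈ Finset.Icc 1 T, (∑ i, g t i * (μ t i - μbar i)) =
      ∑ t ∈ Finset.Icc 1 T, a t * (∑ i, z t i * (μ t i - μbar i))
        - ∑ s ∈ Finset.Icc 1 T, ∑ t ∈ Finset.Icc (s + 1) T,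
            (∑ j ∈ Finset.Icc t T, a j * lam (j - s))
              * (∑ i, g s i * (μ t i - μ (t - 1) i)) := by
  have hdiag : ∀ s ∈ Icc 1 T, ∑ j ∈ Icc s T, a j * lam (j - s) = 1 := fun s hs =>
    sum_Icc_mul_sub_eq_one hq (fun t ht => ha t (Icc_subset_Icc_left (mem_Icc.1 hs).1 ht))
      (mem_Icc.1 hs).1 (mem_Icc.1 hs).2
  have hz_inner : ∀ t ∈ Icc 1 T, ∑ i, z t i * (μ t i - μbar i)
      = ∑ s ∈ Icc 1 t, lam (t - s) * ∑ i, g s i * (μ t i - μbar i) := fun t ht => by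
    simp only [hz t ht, Finset.sum_apply, Pi.smul_apply, smul_eq_mul, sum_mul, mul_sum, mul_assoc]
    exact sum_comm
  have hdiff : ∀ s t, ∑ i, g s i * (μ t i - μ (t - 1) i)
      = ∑ i, g s i * (μ t i - μbar i) - ∑ i, g s i * (μ (t - 1) i - μbar i) := fun s t => by
    simp only [← sum_sub_distrib, ← mul_sub, sub_sub_sub_cancel_right]
  have key := sum_Icc_smul_sum_Icc_smul_eq a lam
    (fun s t => ∑ i, g s i * (μ t i - μbar i)) T hdiag
  simp only [smul_eq_mul] at key
  rw [sum_congr rfl fun t ht => congrArg (a t * ·) (hz_inner t ht), key]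
  simp only [hdiff]
  ring

/-- The regret-decomposition identity for Convolutional Mirror Descent:
`∑_{t=1}^T g_t^⊤(μ_t − μ) = ∑_{t=1}^T a_t z_t^⊤(μ_t − μ)
 − ∑_{s=1}^T ∑_{t=s+1}^T b_{t,s} g_s^⊤(μ_t − μ_{t−1})`,
where `b_{t,s} = ∑_{j=t}^T a_j λ_{j−s}`. -/
theorem cmd_regret_decomposition (m T : ℕ) (hT : 1 ≤ T)
    (g : ℕ → Fin m → ℝ) (lam q : ℕ → ℝ) (hlam0 : lam 0 ≠ 0)
    (hq : ∀ k < T, ∑ i ∈ Finset.range (k + 1), lam i * q (k - i) =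
      if k = 0 then 1 else 0)
    (z : ℕ → Fin m → ℝ)
    (hz : ∀ t ∈ Finset.Icc 1 T, z t = ∑ s ∈ Finset.Icc 1 t, lam (t - s) • g s)
    (a : ℕ → ℝ)
    (ha : ∀ t ∈ Finset.Icc 1 T, a t = ∑ i ∈ Finset.range (T - t + 1), q i)
    (μ : ℕ → Fin m → ℝ) (μbar : Fin m → ℝ) :
    ∑ t ∈ Finset.Icc 1 T, (∑ i, g t i * (μ t i - μbar i)) =
      ∑ t ∈ Finset.Icc 1 T, a t * (∑ i, z t i * (μ t i - μbar i))
        - ∑ s ∈ Finset.Icc 1 T, ∑ t ∈ Finset.Icc (s + 1) T,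
            (∑ j ∈ Finset.Icc t T, a j * lam (j - s))
              * (∑ i, g s i * (μ t i - μ (t - 1) i)) :=
  cmd_regret_decomposition_general m T g lam q hq z hz a ha μ μbar
end

section
/- Let z ∈ ℝ^m, μ_t ∈ U, and let μ_+ ∈ U be a minimizer over U of μ ↦ z^⊤μ + (1/η)V(μ, μ_t). Then for every μ ∈ U: z^⊤(μ_t − μ) ≤ (η/(2σ)) ‖z‖² + (1/η) V(μ, μ_t) − (1/η) V(μ, μ_+). -/
/-!
The first-order optimality condition for `μ₊` and the three-point identity for Bregman
divergences bound `⟪z, μ₊ - μ⟫` by `(1/η) (V(μ, μₜ) - V(μ, μ₊) - V(μ₊, μₜ))`. The remaining term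
`⟪z, μₜ - μ₊⟫` is at most `‖z‖ ‖μ₊ - μₜ‖_*` by duality, and Young's inequality together with strong
convexity, `V(μ₊, μₜ) ≥ (σ/2) ‖μ₊ - μₜ‖_*²`, absorbs it into `(η/(2σ)) ‖z‖² + (1/η) V(μ₊, μₜ)`.
Duality needs the supremum defining `‖·‖_*` to be finite, which holds because all norms on a
finite-dimensional space are equivalent.
-/

open scoped RealInnerProductSpace

/-- The type `E`, to be equipped with the norm `p`. -/
def NormedBy {E : Type*} (_p : E → ℝ) : Type _ := E

/-- The identity from `(E, p)` to `E` is a linear map out of a finite-dimensional normed space,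
hence bounded. -/
theorem exists_norm_le_mul_of_norm_axioms {E : Type*} [NormedAddCommGroup E] [NormedSpace ℝ E]
    [FiniteDimensional ℝ E] (p : E → ℝ) (hp_nonneg : ∀ u, 0 ≤ p u)
    (hp_zero : ∀ u, p u = 0 ↔ u = 0) (hp_smul : ∀ (r : ℝ) u, p (r • u) = |r| * p u)
    (hp_add : ∀ u v, p (u + v) ≤ p u + p v) :
    ∃ C, ∀ y, ‖y‖ ≤ C * p y := by
  let : AddCommGroup (NormedBy p) := inferInstanceAs (AddCommGroup E)
  let : Module ℝ (NormedBy p) := inferInstanceAs (Module ℝ E)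
  let : Norm (NormedBy p) := ⟨p⟩
  have core : NormedSpace.Core ℝ (NormedBy p) :=
    { norm_nonneg := hp_nonneg, norm_smul := hp_smul, norm_triangle := hp_add,
      norm_eq_zero_iff := hp_zero }
  let := NormedAddCommGroup.ofCore core
  let := NormedSpace.ofCore core
  have : FiniteDimensional ℝ (NormedBy p) := inferInstanceAs (FiniteDimensional ℝ E)
  let ι : NormedBy p →ₗ[ℝ] E := LinearMap.id
  exact ⟨‖ι.toContinuousLinearMap‖, ι.toContinuousLinearMap.le_opNorm⟩

theorem inner_le_mul_of_eq_sSup {E : Type*} [NormedAddCommGroup E] [InnerProductSpace ℝ E]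
    (p q : E → ℝ) (hp_nonneg : ∀ u, 0 ≤ p u) (hp_smul : ∀ (r : ℝ) u, p (r • u) = |r| * p u)
    {C : ℝ} (hpC : ∀ y, ‖y‖ ≤ C * p y)
    (hq : ∀ u, q u = sSup {r : ℝ | ∃ y, p y ≤ 1 ∧ r = ⟪u, y⟫}) (w v : E) :
    ⟪w, v⟫ ≤ p w * q v := by
  rcases (hp_nonneg w).eq_or_lt with hw | hw
  · have : ‖w‖ ≤ 0 := by simpa [← hw] using hpC w
    rw [← hw, zero_mul, norm_le_zero_iff.mp this, inner_zero_left]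
  have hbdd : BddAbove {r : ℝ | ∃ y, p y ≤ 1 ∧ r = ⟪v, y⟫} := by
    refine ⟨‖v‖ * |C|, ?_⟩
    rintro r ⟨y, hy, rfl⟩
    calc ⟪v, y⟫ ≤ ‖v‖ * ‖y‖ := real_inner_le_norm _ _
      _ ≤ ‖v‖ * |C| := by
        gcongr; nlinarith [hpC y, le_abs_self C, abs_nonneg C, hp_nonneg y]
  have hunit : p ((p w)⁻¹ • w) ≤ 1 := by
    rw [hp_smul, abs_of_pos (inv_pos.mpr hw), inv_mul_cancel₀ hw.ne']
  have hle : ⟪v, (p w)⁻¹ • w⟫ ≤ q v := hq v ▸ le_csSup hbdd ⟨_, hunit, rfl⟩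
  calc ⟪w, v⟫ = p w * ⟪v, (p w)⁻¹ • w⟫ := by
        rw [real_inner_smul_right, real_inner_comm, mul_inv_cancel_left₀ hw.ne']
    _ ≤ p w * q v := mul_le_mul_of_nonneg_left hle hw.le

section Bregman

variable {E : Type*} [NormedAddCommGroup E] [InnerProductSpace ℝ E]

def bregmanDiv (h : E → ℝ) (g : E → E) (x y : E) : ℝ := h x - h y - ⟪g y, x - y⟫

theorem bregmanDiv_sub_bregmanDiv_sub_bregmanDiv (h : E → ℝ) (g : E → E) (x a b : E) :
    bregmanDiv h g x a - bregmanDiv h g x b - bregmanDiv h g b a = ⟪g b - g a, x - b⟫ := by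
  have hsplit : x - a = (x - b) + (b - a) := by abel
  simp only [bregmanDiv, hsplit, inner_add_right, inner_sub_left]
  ring

theorem hasFDerivAt_bregmanDiv_left [CompleteSpace E] {h : E → ℝ} {g : E → E} {x : E} (y : E)
    (hx : HasGradientAt h (g x) x) :
    HasFDerivAt (bregmanDiv h g · y) (innerSL ℝ (g x - g y)) x := by
  have hlin : HasFDerivAt (fun u => ⟪g y, u - y⟫) (innerSL ℝ (g y)) x :=
    (innerSL ℝ (g y)).hasFDerivAt.comp x ((hasFDerivAt_id x).sub_const y)
  refine ((hx.hasFDerivAt.sub_const (h y)).sub hlin).congr_fderiv ?_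
  ext v
  simp

end Bregman

theorem IsMinOn.hasFDerivAt_sub_nonneg {E : Type*} [NormedAddCommGroup E] [NormedSpace ℝ E]
    {f : E → ℝ} {f' : E →L[ℝ] ℝ} {s : Set E} {x y : E} (hmin : IsMinOn f s x)
    (hf : HasFDerivAt f f' x) (hs : Convex ℝ s) (hx : x ∈ s) (hy : y ∈ s) : 0 ≤ f' (y - x) :=
  hmin.localize.hasFDerivWithinAt_nonneg hf.hasFDerivWithinAt
    (sub_mem_posTangentConeAt_of_segment_subset (hs.segment_subset hx hy))

theorem cmd_three_point_general (m : ℕ)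
    (np nd : EuclideanSpace ℝ (Fin m) → ℝ)
    (hnp_nonneg : ∀ u, 0 ≤ np u)
    (hnp_zero : ∀ u, np u = 0 ↔ u = 0)
    (hnp_smul : ∀ (r : ℝ) u, np (r • u) = |r| * np u)
    (hnp_add : ∀ u v, np (u + v) ≤ np u + np v)
    (hnd : ∀ u, nd u = sSup {r : ℝ | ∃ y, np y ≤ 1 ∧ r = ⟪u, y⟫})
    (σ : ℝ) (hσ : 0 < σ)
    (h : EuclideanSpace ℝ (Fin m) → ℝ)
    (gradh : EuclideanSpace ℝ (Fin m) → EuclideanSpace ℝ (Fin m))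
    (hdiff : ∀ v, HasGradientAt h (gradh v) v)
    (hstrong : ∀ u v, h v + ⟪gradh v, u - v⟫ + σ / 2 * (nd (u - v)) ^ 2 ≤ h u)
    (V : EuclideanSpace ℝ (Fin m) → EuclideanSpace ℝ (Fin m) → ℝ)
    (hV : ∀ x y, V x y = h x - h y - ⟪gradh y, x - y⟫)
    (U : Set (EuclideanSpace ℝ (Fin m)))
    (hU_cvx : Convex ℝ U)
    (η : ℝ) (hη : 0 < η)
    (z μt μplus : EuclideanSpace ℝ (Fin m))
    (hμplus : μplus ∈ U)
    (hmin : ∀ u ∈ U,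
      ⟪z, μplus⟫ + (1 / η) * V μplus μt ≤ ⟪z, u⟫ + (1 / η) * V u μt) :
    ∀ μ ∈ U, ⟪z, μt - μ⟫ ≤
      η / (2 * σ) * (np z) ^ 2 + (1 / η) * V μ μt - (1 / η) * V μ μplus := by
  intro μ hμ
  obtain rfl : V = bregmanDiv h gradh := funext₂ hV
  have hopt : 0 ≤ ⟪z, μ - μplus⟫ + 1 / η * ⟪gradh μplus - gradh μt, μ - μplus⟫ := by
    have hF := (innerSL ℝ z).hasFDerivAt.add
      ((hasFDerivAt_bregmanDiv_left μt (hdiff μplus)).const_mul (1 / η))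
    simpa [inner_sub_left] using
      (isMinOn_iff.mpr hmin).hasFDerivAt_sub_nonneg hF hU_cvx hμplus hμ
  have hthree_point := bregmanDiv_sub_bregmanDiv_sub_bregmanDiv h gradh μ μt μplus
  have hV_lower : σ / 2 * nd (μplus - μt) ^ 2 ≤ bregmanDiv h gradh μplus μt := by
    rw [hV]
    linarith [hstrong μplus μt]
  obtain ⟨C, hC⟩ := exists_norm_le_mul_of_norm_axioms np hnp_nonneg hnp_zero hnp_smul hnp_add
  have hdual : ⟪z, μt - μplus⟫ ≤ np z * nd (μplus - μt) := by
    have hneg : np (-z) = np z := by simpa using hnp_smul (-1) z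
    simpa [hneg, inner_neg_left, ← inner_neg_right] using
      inner_le_mul_of_eq_sSup np nd hnp_nonneg hnp_smul hC hnd (-z) (μplus - μt)
  have hyoung : np z * nd (μplus - μt) ≤
      η / (2 * σ) * np z ^ 2 + 1 / η * (σ / 2 * nd (μplus - μt) ^ 2) := by
    have := sq_nonneg (η * np z - σ * nd (μplus - μt))
    field_simp
    nlinarith
  have hscaled := mul_le_mul_of_nonneg_left hV_lower (one_div_pos.mpr hη).le
  rw [← sub_add_sub_cancel μt μplus μ, inner_add_right, ← neg_sub μ μplus, inner_neg_right]
  linear_combination hdual + hyoung + hscaled + hopt - 1 / η * hthree_point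

/-- (Three-point inequality for the CMD/mirror-descent step.) If `μ₊ ∈ U` minimizes
`μ ↦ z^⊤μ + (1/η)V(μ, μ_t)` over `U`, then for every `μ ∈ U`:
`z^⊤(μ_t − μ) ≤ (η/(2σ))‖z‖² + (1/η)V(μ, μ_t) − (1/η)V(μ, μ₊)`. -/
theorem cmd_three_point (m : ℕ)
    (np nd : EuclideanSpace ℝ (Fin m) → ℝ)
    (hnp_nonneg : ∀ u, 0 ≤ np u)
    (hnp_zero : ∀ u, np u = 0 ↔ u = 0)
    (hnp_smul : ∀ (r : ℝ) u, np (r • u) = |r| * np u)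
    (hnp_add : ∀ u v, np (u + v) ≤ np u + np v)
    (hnd : ∀ u, nd u = sSup {r : ℝ | ∃ y, np y ≤ 1 ∧ r = ⟪u, y⟫})
    (σ : ℝ) (hσ : 0 < σ)
    (h : EuclideanSpace ℝ (Fin m) → ℝ)
    (gradh : EuclideanSpace ℝ (Fin m) → EuclideanSpace ℝ (Fin m))
    (hdiff : ∀ v, HasGradientAt h (gradh v) v)
    (hstrong : ∀ u v, h v + ⟪gradh v, u - v⟫ + σ / 2 * (nd (u - v)) ^ 2 ≤ h u)
    (V : EuclideanSpace ℝ (Fin m) → EuclideanSpace ℝ (Fin m) → ℝ)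
    (hV : ∀ x y, V x y = h x - h y - ⟪gradh y, x - y⟫)
    (U : Set (EuclideanSpace ℝ (Fin m)))
    (hU_ne : U.Nonempty) (hU_cl : IsClosed U) (hU_cvx : Convex ℝ U)
    (η : ℝ) (hη : 0 < η)
    (z μt μplus : EuclideanSpace ℝ (Fin m))
    (hμt : μt ∈ U) (hμplus : μplus ∈ U)
    (hmin : ∀ u ∈ U,
      ⟪z, μplus⟫ + (1 / η) * V μplus μt ≤ ⟪z, u⟫ + (1 / η) * V u μt) :
    ∀ μ ∈ U, ⟪z, μt - μ⟫ ≤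
      η / (2 * σ) * (np z) ^ 2 + (1 / η) * V μ μt - (1 / η) * V μ μplus :=
  cmd_three_point_general m np nd hnp_nonneg hnp_zero hnp_smul hnp_add hnd σ hσ h gradh hdiff
    hstrong V hV U hU_cvx η hη z μt μplus hμplus hmin
end

section
/- (PD controller / optimistic mirror descent.) In the CMD setup with weights λ_0 = 1, λ_1 = −α_D where 0 ≤ α_D < 1, and λ_i = 0 for i = 2, …, T−1, suppose ‖g_t‖ ≤ G₁ and ‖z_t‖ ≤ G₂ for all t. Then for every μ ∈ U: ∑_{t=1}^T (w_t(μ_t) − w_t(μ)) ≤ η T G₂² / (2σ(1−α_D)) + V(μ, μ_1)/(η(1−α_D)) + √2 · G₁ G₂ T η / (σ(1−α_D)). -/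
/-!
With `λ₀ = 1`, `λ₁ = -α_D` and all other weights zero, `z_t = g_t - α_D g_{t-1}`: CMD is plain
mirror descent driven by the `z_t`, and `g_t = z_t + α_D g_{t-1}`. A mirror step moves the
iterate by at most `η G₂ / σ` in the dual norm, whence
`⟪g_t, μ_t - μ⟫ ≤ ⟪z_t, μ_t - μ⟫ + α_D G₁ G₂ η / σ + α_D ⟪g_{t-1}, μ_{t-1} - μ⟫`.
The partial sums of `⟪z_t, μ_t - μ⟫` obey the usual mirror-descent bound
`n η G₂² / (2σ) + V(μ, μ₁) / η` (three-point inequality and telescoping), and unrolling the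
recursion costs a factor `1 / (1 - α_D)`. By convexity the regret is at most `∑ ⟪g_t, μ_t - μ⟫`.
-/

open scoped RealInnerProductSpace

open Finset

section DualNorm

variable {E : Type*} [NormedAddCommGroup E] [InnerProductSpace ℝ E]

/-- As a junk value `sSup` gives `0` when the set is unbounded; it is bounded when `p` is a norm
and `E` is finite-dimensional (`bddAbove_inner_of_le_one`). -/
noncomputable def dualNorm (p : E → ℝ) (u : E) : ℝ :=
  sSup {r : ℝ | ∃ y, p y ≤ 1 ∧ r = ⟪u, y⟫}

variable {p : Seminorm ℝ E}

theorem dualNorm_neg (u : E) : dualNorm p (-u) = dualNorm p u := by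
  unfold dualNorm
  congr 1
  ext r
  constructor <;>
  · rintro ⟨y, hy, rfl⟩
    exact ⟨-y, by rwa [map_neg_eq_map], by simp⟩

theorem dualNorm_sub_comm (u v : E) :
    dualNorm p (u - v) = dualNorm p (v - u) := by
  rw [← neg_sub, dualNorm_neg]

variable [FiniteDimensional ℝ E]

theorem Seminorm.exists_pos_mul_norm_le (hp : ∀ x, p x = 0 → x = 0) :
    ∃ c > 0, ∀ x, c * ‖x‖ ≤ p x := by
  rcases subsingleton_or_nontrivial E with hE | hE
  · exact ⟨1, one_pos, fun x => by simp [Subsingleton.elim x 0]⟩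
  -- `p` is convex, hence continuous; `c` is its minimum over the compact unit sphere.
  obtain ⟨y, hy, hmin⟩ := (isCompact_sphere (0 : E) 1).exists_isMinOn
    (NormedSpace.sphere_nonempty.mpr zero_le_one)
    p.convexOn.locallyLipschitz.continuous.continuousOn
  rw [mem_sphere_zero_iff_norm] at hy
  refine ⟨p y, (apply_nonneg p y).lt_of_ne' fun h => ?_, fun x => ?_⟩
  · simp [hp y h] at hy
  rcases eq_or_ne x 0 with rfl | hx
  · simp
  have hx' : 0 < ‖x‖ := norm_pos_iff.mpr hx
  have hle : p y ≤ p (‖x‖⁻¹ • x) := hmin (by simp [norm_smul, hx'.ne'])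
  rw [map_smul_eq_mul, norm_inv, norm_norm] at hle
  calc p y * ‖x‖ ≤ ‖x‖⁻¹ * p x * ‖x‖ := by gcongr
    _ = p x := by field_simp

theorem bddAbove_inner_of_le_one (hp : ∀ x, p x = 0 → x = 0) (u : E) :
    BddAbove {r : ℝ | ∃ y, p y ≤ 1 ∧ r = ⟪u, y⟫} := by
  obtain ⟨c, hc, hle⟩ := p.exists_pos_mul_norm_le hp
  refine ⟨‖u‖ * (1 / c), ?_⟩
  rintro _ ⟨y, hy, rfl⟩
  have hy' : ‖y‖ ≤ 1 / c := (le_div_iff₀' hc).2 ((hle y).trans hy)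
  exact (real_inner_le_norm u y).trans (by gcongr)

theorem dualNorm_nonneg (hp : ∀ x, p x = 0 → x = 0) (u : E) : 0 ≤ dualNorm p u :=
  le_csSup (bddAbove_inner_of_le_one hp u) ⟨0, by simp, by simp⟩

theorem inner_le_mul_dualNorm (hp : ∀ x, p x = 0 → x = 0) (a x : E) :
    ⟪a, x⟫ ≤ p a * dualNorm p x := by
  rcases eq_or_ne a 0 with rfl | ha
  · simp
  have hpa : 0 < p a := (apply_nonneg p a).lt_of_ne' (mt (hp a) ha)
  have hle : ⟪x, (p a)⁻¹ • a⟫ ≤ dualNorm p x := le_csSup (bddAbove_inner_of_le_one hp x)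
    ⟨(p a)⁻¹ • a, by rw [map_smul_eq_mul, norm_inv, Real.norm_of_nonneg hpa.le,
      inv_mul_cancel₀ hpa.ne'], rfl⟩
  rw [real_inner_smul_right, real_inner_comm] at hle
  exact (inv_mul_le_iff₀ hpa).1 hle

end DualNorm

section Sequences

variable {R F : ℕ → ℝ} {α : ℝ} {T : ℕ}

theorem sum_Icc_le_of_le_add_sub {a v : ℕ → ℝ} {B : ℝ} (n : ℕ)
    (h : ∀ t ∈ Icc 1 n, a t ≤ B + (v t - v (t + 1))) :
    ∑ t ∈ Icc 1 n, a t ≤ n * B + (v 1 - v (n + 1)) := by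
  induction n with
  | zero => simp
  | succ n ih =>
    rw [sum_Icc_succ_top (by omega), Nat.cast_succ]
    have := h (n + 1) (by simp)
    linarith [ih fun t ht => h t (Icc_subset_Icc_right n.le_succ ht)]

theorem sum_Icc_succ_le_of_le_add_mul (hR₁ : R 1 ≤ F 1)
    (hR : ∀ t, 1 ≤ t → t + 1 ≤ T → R (t + 1) ≤ F (t + 1) + α * R t) {n : ℕ} (hn : n + 1 ≤ T) :
    ∑ t ∈ Icc 1 (n + 1), R t ≤ ∑ t ∈ Icc 1 (n + 1), F t + α * ∑ t ∈ Icc 1 n, R t := by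
  induction n with
  | zero => simpa using hR₁
  | succ n ih =>
    have hRs := sum_Icc_succ_top (show 1 ≤ n + 1 + 1 by omega) R
    have hRs' := congrArg (α * ·) (sum_Icc_succ_top (show 1 ≤ n + 1 by omega) R)
    simp only [mul_add] at hRs'
    have hFs := sum_Icc_succ_top (show 1 ≤ n + 1 + 1 by omega) F
    linarith [ih (by omega), hR (n + 1) (by omega) hn]

theorem sum_Icc_le_div_one_sub_of_le_add_mul {M : ℝ} (hα₀ : 0 ≤ α) (hα₁ : α < 1)
    (hR₁ : R 1 ≤ F 1) (hR : ∀ t, 1 ≤ t → t + 1 ≤ T → R (t + 1) ≤ F (t + 1) + α * R t)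
    (hF : ∀ n ≤ T, ∑ t ∈ Icc 1 n, F t ≤ M) :
    ∑ t ∈ Icc 1 T, R t ≤ M / (1 - α) := by
  have hα : 0 < 1 - α := by linarith
  -- The `R t` may be negative, so the recursion is unrolled on partial sums, not termwise.
  suffices ∀ n ≤ T, ∑ t ∈ Icc 1 n, R t ≤ M / (1 - α) from this T le_rfl
  intro n hn
  induction n with
  | zero => simpa using div_nonneg (by simpa using hF 0 (Nat.zero_le _)) hα.le
  | succ n ih =>
    have hstep := sum_Icc_succ_le_of_le_add_mul hR₁ hR hn
    have := mul_le_mul_of_nonneg_left (ih (by omega)) hα₀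
    have hM : M + α * (M / (1 - α)) = M / (1 - α) := by field_simp; ring
    linarith [hF (n + 1) hn]

end Sequences

section Momentum

variable {E : Type*} [NormedAddCommGroup E] [InnerProductSpace ℝ E] {α κ : ℝ}

theorem inner_sub_le_of_eq_add_smul {g g' z' x x' u : E} (hα : 0 ≤ α) (hg : g' = z' + α • g)
    (hcross : ⟪g, x' - x⟫ ≤ κ) :
    ⟪g', x' - u⟫ ≤ ⟪z', x' - u⟫ + α * κ + α * ⟪g, x - u⟫ := by
  rw [hg, inner_add_left, real_inner_smul_left, ← sub_add_sub_cancel x' x u, inner_add_right g]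
  linarith [mul_le_mul_of_nonneg_left hcross hα]

theorem sum_inner_sub_le_of_eq_add_smul {g z μ : ℕ → E} {u : E} {A D : ℝ} {T : ℕ}
    (hα₀ : 0 ≤ α) (hα₁ : α < 1) (hκ : 0 ≤ κ) (hA : 0 ≤ A) (hg₁ : g 1 = z 1)
    (hg : ∀ t, 1 ≤ t → t + 1 ≤ T → g (t + 1) = z (t + 1) + α • g t)
    (hcross : ∀ t, 1 ≤ t → t + 1 ≤ T → ⟪g t, μ (t + 1) - μ t⟫ ≤ κ)
    (hz : ∀ n ≤ T, ∑ t ∈ Icc 1 n, ⟪z t, μ t - u⟫ ≤ n * A + D) :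
    ∑ t ∈ Icc 1 T, ⟪g t, μ t - u⟫ ≤ (T * (A + α * κ) + D) / (1 - α) := by
  refine sum_Icc_le_div_one_sub_of_le_add_mul (F := fun t => ⟪z t, μ t - u⟫ + α * κ) hα₀ hα₁
    ?_ (fun t ht htT => inner_sub_le_of_eq_add_smul hα₀ (hg t ht htT) (hcross t ht htT))
    fun n hn => ?_
  · rw [hg₁]
    linarith [mul_nonneg hα₀ hκ]
  · have hnT : (n : ℝ) * (A + α * κ) ≤ T * (A + α * κ) := by gcongr
    rw [sum_add_distrib, sum_const, Nat.card_Icc, Nat.add_sub_cancel, nsmul_eq_mul]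
    linarith [hz n hn, mul_add (n : ℝ) A (α * κ)]

end Momentum

section MirrorStep

variable {E : Type*} [NormedAddCommGroup E] [InnerProductSpace ℝ E]

theorem IsMinOn.hasFDerivAt_apply_sub_nonneg {f : E → ℝ} {f' : StrongDual ℝ E} {U : Set E}
    {x u : E} (hmin : IsMinOn f U x) (hf : HasFDerivAt f f' x) (hU : Convex ℝ U) (hx : x ∈ U)
    (hu : u ∈ U) : 0 ≤ f' (u - x) :=
  hmin.localize.hasFDerivWithinAt_nonneg hf.hasFDerivWithinAt
    (sub_mem_posTangentConeAt_of_segment_subset (hU.segment_subset hx hu))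

def bregman (h : E → ℝ) (gradh : E → E) (x y : E) : ℝ := h x - h y - ⟪gradh y, x - y⟫

@[simp]
theorem bregman_self (h : E → ℝ) (gradh : E → E) (x : E) : bregman h gradh x x = 0 := by
  simp [bregman]

def IsMirrorStep (h : E → ℝ) (gradh : E → E) (U : Set E) (η : ℝ) (z x x' : E) : Prop :=
  x' ∈ U ∧ ∀ u ∈ U,
    ⟪z, x'⟫ + (1 / η) * bregman h gradh x' x ≤ ⟪z, u⟫ + (1 / η) * bregman h gradh u x

variable {h : E → ℝ} {gradh : E → E} {U : Set E} {η : ℝ} {z x x' u : E}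

theorem IsMirrorStep.three_point [CompleteSpace E] (hdiff : ∀ v, HasGradientAt h (gradh v) v)
    (hU : Convex ℝ U) (hη : 0 < η) (hstep : IsMirrorStep h gradh U η z x x') (hu : u ∈ U) :
    η * ⟪z, x' - u⟫ ≤ bregman h gradh u x - bregman h gradh u x' - bregman h gradh x' x := by
  have hderiv := ((innerSL ℝ z).hasFDerivAt (x := x')).add
    ((((hdiff x').hasFDerivAt.sub_const (h x)).sub
      ((innerSL ℝ (gradh x)).hasFDerivAt.sub_const ⟪gradh x, x⟫)).const_mul (1 / η))
  have hmin : IsMinOn (fun y => innerSL ℝ z y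
      + 1 / η * (h y - h x - (innerSL ℝ (gradh x) y - ⟪gradh x, x⟫))) U x' := by
    intro y hy
    have := hstep.2 y hy
    simp only [bregman, inner_sub_right] at this
    simpa only [coe_innerSL_apply, one_div, Set.mem_ofPred_eq] using this
  have := hmin.hasFDerivAt_apply_sub_nonneg hderiv hU hstep.1 hu
  simp only [one_div, add_apply, coe_innerSL_apply, inner_sub_right, smul_apply, sub_apply,
    InnerProductSpace.toDual_apply_apply, smul_eq_mul, bregman] at this ⊢
  have h2 := mul_le_mul_of_nonneg_left this hη.le
  rw [mul_zero, mul_add, ← mul_assoc, mul_inv_cancel₀ hη.ne', one_mul] at h2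
  linarith

variable [CompleteSpace E] [FiniteDimensional ℝ E] {p : Seminorm ℝ E} {σ G : ℝ}

theorem IsMirrorStep.dualNorm_sub_le (hp : ∀ v, p v = 0 → v = 0)
    (hdiff : ∀ v, HasGradientAt h (gradh v) v) (hU : Convex ℝ U) (hη : 0 < η) (hσ : 0 < σ)
    (hV : ∀ u v, σ / 2 * dualNorm p (u - v) ^ 2 ≤ bregman h gradh u v)
    (hstep : IsMirrorStep h gradh U η z x x') (hx : x ∈ U) (hz : p z ≤ G) :
    dualNorm p (x' - x) ≤ η * G / σ := by
  rw [dualNorm_sub_comm]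
  set N := dualNorm p (x - x')
  have hN : 0 ≤ N := dualNorm_nonneg hp _
  have hpair : ⟪z, x - x'⟫ ≤ G * N := (inner_le_mul_dualNorm hp z _).trans (by gcongr)
  have hsq : σ * N ^ 2 ≤ η * (G * N) := by
    have h3 := hstep.three_point hdiff hU hη hx
    rw [bregman_self, ← neg_sub, inner_neg_right] at h3
    have hVx' := hV x' x
    rw [dualNorm_sub_comm] at hVx'
    nlinarith [hV x x']
  rcases hN.eq_or_lt with h0 | hpos
  · rw [← h0]
    exact div_nonneg (mul_nonneg hη.le ((apply_nonneg p z).trans hz)) hσ.le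
  · rw [le_div_iff₀ hσ]
    nlinarith

theorem IsMirrorStep.inner_sub_le (hp : ∀ v, p v = 0 → v = 0)
    (hdiff : ∀ v, HasGradientAt h (gradh v) v) (hU : Convex ℝ U) (hη : 0 < η) (hσ : 0 < σ)
    (hV : ∀ u v, σ / 2 * dualNorm p (u - v) ^ 2 ≤ bregman h gradh u v)
    (hstep : IsMirrorStep h gradh U η z x x') (hu : u ∈ U) (hz : p z ≤ G) :
    ⟪z, x - u⟫ ≤ η * G ^ 2 / (2 * σ) + (bregman h gradh u x - bregman h gradh u x') / η := by
  set N := dualNorm p (x - x')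
  have hN : 0 ≤ N := dualNorm_nonneg hp _
  have hpair : ⟪z, x - x'⟫ ≤ G * N := (inner_le_mul_dualNorm hp z _).trans (by gcongr)
  have hVx' := hV x' x
  rw [dualNorm_sub_comm] at hVx'
  have h3 := hstep.three_point hdiff hU hη hu
  have amgm : η * G * N - σ / 2 * N ^ 2 ≤ η ^ 2 * G ^ 2 / (2 * σ) := by
    rw [le_div_iff₀ (by positivity)]
    nlinarith [sq_nonneg (σ * N - η * G)]
  have key : η * ⟪z, x - u⟫ ≤
      η ^ 2 * G ^ 2 / (2 * σ) + (bregman h gradh u x - bregman h gradh u x') := by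
    rw [← sub_add_sub_cancel x x' u, inner_add_right, mul_add]
    nlinarith [mul_le_mul_of_nonneg_left hpair hη.le]
  have := div_le_div_of_nonneg_right key hη.le
  rwa [mul_div_cancel_left₀ _ hη.ne', add_div,
    show η ^ 2 * G ^ 2 / (2 * σ) / η = η * G ^ 2 / (2 * σ) by field_simp] at this

theorem sum_inner_sub_le_of_isMirrorStep (hp : ∀ v, p v = 0 → v = 0)
    (hdiff : ∀ v, HasGradientAt h (gradh v) v) (hU : Convex ℝ U) (hη : 0 < η) (hσ : 0 < σ)
    (hV : ∀ u v, σ / 2 * dualNorm p (u - v) ^ 2 ≤ bregman h gradh u v)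
    {T : ℕ} {μ z : ℕ → E} (hμ : ∀ t ∈ Icc 1 T, IsMirrorStep h gradh U η (z t) (μ t) (μ (t + 1)))
    (hz : ∀ t ∈ Icc 1 T, p (z t) ≤ G) (hu : u ∈ U) {n : ℕ} (hn : n ≤ T) :
    ∑ t ∈ Icc 1 n, ⟪z t, μ t - u⟫ ≤
      n * (η * G ^ 2 / (2 * σ)) + bregman h gradh u (μ 1) / η := by
  have hsum := sum_Icc_le_of_le_add_sub (a := fun t => ⟪z t, μ t - u⟫)
    (B := η * G ^ 2 / (2 * σ)) (v := fun t => bregman h gradh u (μ t) / η) n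
    fun t ht => by
      have htT := Icc_subset_Icc_right hn ht
      rw [← sub_div]
      exact (hμ t htT).inner_sub_le hp hdiff hU hη hσ hV hu (hz t htT)
  have hlast : 0 ≤ bregman h gradh u (μ (n + 1)) / η :=
    div_nonneg ((by positivity : 0 ≤ σ / 2 * _).trans (hV _ _)) hη.le
  linarith

end MirrorStep

theorem sum_Icc_smul_eq_sub_smul_of_weights {M : Type*} [AddCommGroup M] [Module ℝ M]
    {lam : ℕ → ℝ} {α : ℝ} {T : ℕ} (hlam0 : lam 0 = 1) (hlam1 : lam 1 = -α)
    (hlam : ∀ i, 2 ≤ i → i ≤ T - 1 → lam i = 0) (g : ℕ → M) {t : ℕ} (ht : 1 ≤ t)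
    (htT : t + 1 ≤ T) :
    ∑ s ∈ Icc 1 (t + 1), lam (t + 1 - s) • g s = g (t + 1) - α • g t := by
  obtain ⟨k, rfl⟩ : ∃ k, t = k + 1 := ⟨t - 1, by omega⟩
  have hzero : ∑ s ∈ Icc 1 k, lam (k + 2 - s) • g s = 0 :=
    sum_eq_zero fun s hs => by
      rw [hlam _ (by simp at hs; omega) (by simp at hs; omega), zero_smul]
  rw [sum_Icc_succ_top (by omega), sum_Icc_succ_top (by omega), hzero, Nat.sub_self,
    show k + 1 + 1 - (k + 1) = 1 by omega, hlam0, hlam1]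
  module

theorem pd_controller_regret_general (m T : ℕ) (hT : 1 ≤ T)
    (np nd : EuclideanSpace ℝ (Fin m) → ℝ)
    (hnp_zero : ∀ u, np u = 0 ↔ u = 0)
    (hnp_smul : ∀ (r : ℝ) u, np (r • u) = |r| * np u)
    (hnp_add : ∀ u v, np (u + v) ≤ np u + np v)
    (hnd : ∀ u, nd u = sSup {r : ℝ | ∃ y, np y ≤ 1 ∧ r = ⟪u, y⟫})
    (σ : ℝ) (hσ : 0 < σ)
    (h : EuclideanSpace ℝ (Fin m) → ℝ)
    (gradh : EuclideanSpace ℝ (Fin m) → EuclideanSpace ℝ (Fin m))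
    (hdiff : ∀ v, HasGradientAt h (gradh v) v)
    (hstrong : ∀ u v, h v + ⟪gradh v, u - v⟫ + σ / 2 * (nd (u - v)) ^ 2 ≤ h u)
    (V : EuclideanSpace ℝ (Fin m) → EuclideanSpace ℝ (Fin m) → ℝ)
    (hV : ∀ x y, V x y = h x - h y - ⟪gradh y, x - y⟫)
    (U : Set (EuclideanSpace ℝ (Fin m)))
    (hU_cvx : Convex ℝ U)
    (η : ℝ) (hη : 0 < η)
    (lam : ℕ → ℝ)
    (w : ℕ → EuclideanSpace ℝ (Fin m) → ℝ)
    (μ : ℕ → EuclideanSpace ℝ (Fin m))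
    (g z : ℕ → EuclideanSpace ℝ (Fin m))
    (hμ1 : μ 1 ∈ U)
    (hsubgrad : ∀ t ∈ Finset.Icc 1 T, ∀ u,
      w t (μ t) + ⟪g t, u - μ t⟫ ≤ w t u)
    (hz : ∀ t ∈ Finset.Icc 1 T, z t = ∑ s ∈ Finset.Icc 1 t, lam (t - s) • g s)
    (hupdate : ∀ t ∈ Finset.Icc 1 T, μ (t + 1) ∈ U ∧
      ∀ u ∈ U, ⟪z t, μ (t + 1)⟫ + (1 / η) * V (μ (t + 1)) (μ t)
        ≤ ⟪z t, u⟫ + (1 / η) * V u (μ t))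
    (αD : ℝ) (hαD0 : 0 ≤ αD) (hαD1 : αD < 1)
    (hlam0 : lam 0 = 1)
    (hlam1 : lam 1 = -αD)
    (hlam : ∀ i, 2 ≤ i → i ≤ T - 1 → lam i = 0)
    (G₁ G₂ : ℝ)
    (hG1 : ∀ t ∈ Finset.Icc 1 T, np (g t) ≤ G₁)
    (hG2 : ∀ t ∈ Finset.Icc 1 T, np (z t) ≤ G₂)
    (μbar : EuclideanSpace ℝ (Fin m)) (hμbar : μbar ∈ U) :
    ∑ t ∈ Finset.Icc 1 T, (w t (μ t) - w t μbar) ≤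
      η * (T : ℝ) * G₂ ^ 2 / (2 * σ * (1 - αD))
        + V μbar (μ 1) / (η * (1 - αD))
        + Real.sqrt 2 * G₁ * G₂ * (T : ℝ) * η / (σ * (1 - αD)) := by
  let p : Seminorm ℝ (EuclideanSpace ℝ (Fin m)) :=
    Seminorm.of np hnp_add fun r u => by rw [Real.norm_eq_abs]; exact hnp_smul r u
  have hp : ∀ u, p u = 0 → u = 0 := fun u => (hnp_zero u).1
  obtain rfl : nd = dualNorm p := funext hnd
  obtain rfl : V = bregman h gradh := funext fun x => funext (hV x)
  have hVσ : ∀ u v, σ / 2 * dualNorm p (u - v) ^ 2 ≤ bregman h gradh u v := fun u v => by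
    unfold bregman; linarith [hstrong u v]
  have hstep : ∀ t ∈ Icc 1 T, IsMirrorStep h gradh U η (z t) (μ t) (μ (t + 1)) := hupdate
  have hmem : ∀ t ∈ Icc 1 T, μ t ∈ U := by
    rintro (_ | _ | t) ht
    · simp at ht
    · exact hμ1
    · exact (hstep (t + 1) (by simp at ht ⊢; omega)).1
  have hT1 : 1 ∈ Icc 1 T := by simp [hT]
  have hG₁ : 0 ≤ G₁ := (apply_nonneg p _).trans (hG1 1 hT1)
  have hG₂ : 0 ≤ G₂ := (apply_nonneg p _).trans (hG2 1 hT1)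
  have hg : ∀ t, 1 ≤ t → t + 1 ≤ T → g (t + 1) = z (t + 1) + αD • g t := fun t ht htT => by
    rw [hz (t + 1) (by simp; omega),
      sum_Icc_smul_eq_sub_smul_of_weights hlam0 hlam1 hlam g ht htT, sub_add_cancel]
  have hcross : ∀ t, 1 ≤ t → t + 1 ≤ T → ⟪g t, μ (t + 1) - μ t⟫ ≤ G₁ * (η * G₂ / σ) :=
    fun t ht htT => by
      have htI : t ∈ Icc 1 T := by simp; omega
      exact (inner_le_mul_dualNorm hp _ _).trans (mul_le_mul (hG1 t htI)
        ((hstep t htI).dualNorm_sub_le hp hdiff hU_cvx hη hσ hVσ (hmem t htI) (hG2 t htI))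
        (dualNorm_nonneg hp _) hG₁)
  calc ∑ t ∈ Icc 1 T, (w t (μ t) - w t μbar) ≤ ∑ t ∈ Icc 1 T, ⟪g t, μ t - μbar⟫ := by
        refine sum_le_sum fun t ht => ?_
        have := hsubgrad t ht μbar
        rw [← neg_sub, inner_neg_right] at this
        linarith
    _ ≤ (T * (η * G₂ ^ 2 / (2 * σ) + αD * (G₁ * (η * G₂ / σ)))
          + bregman h gradh μbar (μ 1) / η) / (1 - αD) :=
        sum_inner_sub_le_of_eq_add_smul hαD0 hαD1 (by positivity) (by positivity)
          (by simpa [hlam0] using (hz 1 hT1).symm) hg hcross fun n hn =>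
          sum_inner_sub_le_of_isMirrorStep hp hdiff hU_cvx hη hσ hVσ hstep hG2 hμbar hn
    _ = η * T * G₂ ^ 2 / (2 * σ * (1 - αD)) + bregman h gradh μbar (μ 1) / (η * (1 - αD))
          + αD * G₁ * G₂ * T * η / (σ * (1 - αD)) := by
        have : 1 - αD ≠ 0 := by linarith
        field_simp
        ring
    _ ≤ _ := by
        gcongr
        linarith [Real.one_lt_sqrt_two]

/-- (PD controller / optimistic mirror descent.) With weights `λ_0 = 1`,
`λ_1 = −α_D` (`0 ≤ α_D < 1`) and `λ_i = 0` for `i ≥ 2`, CMD satisfies the stated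
regret bound. -/
theorem pd_controller_regret (m T : ℕ) (hT : 1 ≤ T)
    (np nd : EuclideanSpace ℝ (Fin m) → ℝ)
    (hnp_nonneg : ∀ u, 0 ≤ np u)
    (hnp_zero : ∀ u, np u = 0 ↔ u = 0)
    (hnp_smul : ∀ (r : ℝ) u, np (r • u) = |r| * np u)
    (hnp_add : ∀ u v, np (u + v) ≤ np u + np v)
    (hnd : ∀ u, nd u = sSup {r : ℝ | ∃ y, np y ≤ 1 ∧ r = ⟪u, y⟫})
    (σ : ℝ) (hσ : 0 < σ)
    (h : EuclideanSpace ℝ (Fin m) → ℝ)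
    (gradh : EuclideanSpace ℝ (Fin m) → EuclideanSpace ℝ (Fin m))
    (hdiff : ∀ v, HasGradientAt h (gradh v) v)
    (hstrong : ∀ u v, h v + ⟪gradh v, u - v⟫ + σ / 2 * (nd (u - v)) ^ 2 ≤ h u)
    (V : EuclideanSpace ℝ (Fin m) → EuclideanSpace ℝ (Fin m) → ℝ)
    (hV : ∀ x y, V x y = h x - h y - ⟪gradh y, x - y⟫)
    (U : Set (EuclideanSpace ℝ (Fin m)))
    (hU_ne : U.Nonempty) (hU_cl : IsClosed U) (hU_cvx : Convex ℝ U)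
    (η : ℝ) (hη : 0 < η)
    (lam : ℕ → ℝ)
    (w : ℕ → EuclideanSpace ℝ (Fin m) → ℝ)
    (hw_convex : ∀ t ∈ Finset.Icc 1 T, ConvexOn ℝ Set.univ (w t))
    (μ : ℕ → EuclideanSpace ℝ (Fin m))
    (g z : ℕ → EuclideanSpace ℝ (Fin m))
    (hμ1 : μ 1 ∈ U)
    (hsubgrad : ∀ t ∈ Finset.Icc 1 T, ∀ u,
      w t (μ t) + ⟪g t, u - μ t⟫ ≤ w t u)
    (hz : ∀ t ∈ Finset.Icc 1 T, z t = ∑ s ∈ Finset.Icc 1 t, lam (t - s) • g s)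
    (hupdate : ∀ t ∈ Finset.Icc 1 T, μ (t + 1) ∈ U ∧
      ∀ u ∈ U, ⟪z t, μ (t + 1)⟫ + (1 / η) * V (μ (t + 1)) (μ t)
        ≤ ⟪z t, u⟫ + (1 / η) * V u (μ t))
    (htilde : ∀ t ∈ Finset.Icc 1 T, ∃ ν, gradh ν = gradh (μ t) - η • z t)
    (αD : ℝ) (hαD0 : 0 ≤ αD) (hαD1 : αD < 1)
    (hlam0 : lam 0 = 1)
    (hlam1 : lam 1 = -αD)
    (hlam : ∀ i, 2 ≤ i → i ≤ T - 1 → lam i = 0)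
    (G₁ G₂ : ℝ)
    (hG1 : ∀ t ∈ Finset.Icc 1 T, np (g t) ≤ G₁)
    (hG2 : ∀ t ∈ Finset.Icc 1 T, np (z t) ≤ G₂)
    (μbar : EuclideanSpace ℝ (Fin m)) (hμbar : μbar ∈ U) :
    ∑ t ∈ Finset.Icc 1 T, (w t (μ t) - w t μbar) ≤
      η * (T : ℝ) * G₂ ^ 2 / (2 * σ * (1 - αD))
        + V μbar (μ 1) / (η * (1 - αD))
        + Real.sqrt 2 * G₁ * G₂ * (T : ℝ) * η / (σ * (1 - αD)) :=
  pd_controller_regret_general m T hT np nd hnp_zero hnp_smul hnp_add hnd σ hσ h gradh hdiff hstrong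
    V hV U hU_cvx η hη lam w μ g z hμ1 hsubgrad hz hupdate αD hαD0 hαD1 hlam0 hlam1 hlam G₁ G₂ hG1
    hG2 μbar hμbar
end

section
/- Let a > 0, c > 0, β ≥ 0, and let z_+ > z_− ≥ 0 be real numbers with z_+ + z_− = b/a and z_+ z_− = c/a for some b (i.e., z_± are the roots of a z² − b z + c). Define q_0 := 1/c and q_i := (1/(a(z_+ − z_−))) · ((a/c)^{i+1}(z_+^{i+1} − z_−^{i+1}) − β (a/c)^i (z_+^i − z_−^i)) for i ≥ 1. If a z_+ < c, then for every N ≥ 1: ∑_{i=0}^{N−1} |q_i| ≤ 1/c + (1+β) z_+ / (c (1 − a z_+/c)²). -/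
/-!
With `s k := (a/c)^k (z₊^k - z₋^k) / (a (z₊ - z₋))` one has `q i = s (i+1) - β s i` for
every `i`, including `i = 0` because `s 0 = 0` and `s 1 = 1/c`. The bound
`z₊^k - z₋^k ≤ k (z₊ - z₋) z₊^(k-1)` gives `0 ≤ s (k+1) ≤ (k+1) r^k / c` with `r = a z₊ / c < 1`,
and `∑ (k+1) r^k = 1/(1-r)^2` bounds the partial sums of `|q i|` by `(1+β) / (c (1-r)^2)`.
This is at most the claimed bound since `a z₊ < c = a z₊ z₋` forces `z₊ > z₋ > 1`.
-/

open Finset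

theorem sum_range_succ_mul_pow_le {r : ℝ} (hr₀ : 0 ≤ r) (hr₁ : r < 1) (N : ℕ) :
    ∑ i ∈ range N, ((i : ℝ) + 1) * r ^ i ≤ 1 / (1 - r) ^ 2 := by
  have hr : ‖r‖ < 1 := by rwa [Real.norm_of_nonneg hr₀]
  have h := hasSum_choose_mul_geometric_of_norm_lt_one 1 hr
  simp only [Nat.choose_one_right, Nat.cast_add, Nat.cast_one] at h
  exact sum_le_hasSum _ (fun i _ => by positivity) h

theorem pow_succ_sub_pow_succ_le {α : Type*} [CommRing α] [LinearOrder α] [IsOrderedRing α]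
    {x y : α} (hy : 0 ≤ y) (hyx : y ≤ x) (n : ℕ) :
    x ^ (n + 1) - y ^ (n + 1) ≤ (x - y) * ((n : α) + 1) * x ^ n := by
  have hx : 0 ≤ x := hy.trans hyx
  have h := abs_pow_sub_pow_le x y (n + 1)
  rwa [abs_of_nonneg (sub_nonneg.mpr (pow_le_pow_left₀ hy hyx _)),
    abs_of_nonneg (sub_nonneg.mpr hyx), abs_of_nonneg hx, abs_of_nonneg hy, max_eq_left hyx,
    Nat.add_sub_cancel, Nat.cast_succ] at h

/-- When `z₊, z₋` are the roots of `a z² - b z + c`, `pidKernel a c z₊ z₋ (k+1)` is the `k`-th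
Taylor coefficient of `1 / (c - b x + a x²)`. -/
noncomputable def pidKernel (a c zp zm : ℝ) (k : ℕ) : ℝ :=
  (a / c) ^ k * (zp ^ k - zm ^ k) / (a * (zp - zm))

section pidKernel

variable {a c zp zm : ℝ}

@[simp]
theorem pidKernel_zero : pidKernel a c zp zm 0 = 0 := by
  simp [pidKernel]

theorem pidKernel_one (ha : a ≠ 0) (hz : zp ≠ zm) : pidKernel a c zp zm 1 = 1 / c := by
  rw [pidKernel, pow_one, pow_one, pow_one, mul_div_mul_right _ _ (sub_ne_zero.mpr hz),
    div_div_cancel_left' ha, one_div]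

theorem pidKernel_nonneg (ha : 0 < a) (hc : 0 < c) (hzm : 0 ≤ zm) (hz : zm < zp) (k : ℕ) :
    0 ≤ pidKernel a c zp zm k := by
  have hd : 0 < zp - zm := sub_pos.mpr hz
  have hpow : 0 ≤ zp ^ k - zm ^ k := sub_nonneg.mpr (pow_le_pow_left₀ hzm hz.le k)
  unfold pidKernel
  positivity

theorem pidKernel_succ_le (ha : 0 < a) (hc : 0 < c) (hzm : 0 ≤ zm) (hz : zm < zp) (j : ℕ) :
    pidKernel a c zp zm (j + 1) ≤ ((j : ℝ) + 1) * (a * zp / c) ^ j / c := by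
  have hd : 0 < zp - zm := sub_pos.mpr hz
  have hpow := pow_succ_sub_pow_succ_le hzm hz.le j
  calc pidKernel a c zp zm (j + 1)
      ≤ (a / c) ^ (j + 1) * ((zp - zm) * ((j : ℝ) + 1) * zp ^ j) / (a * (zp - zm)) := by
        unfold pidKernel; gcongr
    _ = ((j : ℝ) + 1) * (a * zp / c) ^ j / c := by
        rw [div_pow, div_pow, mul_pow, pow_succ, pow_succ]
        field_simp

theorem sum_range_pidKernel_succ_le (ha : 0 < a) (hc : 0 < c) (hzm : 0 ≤ zm) (hz : zm < zp)
    (hlt : a * zp < c) (N : ℕ) :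
    ∑ i ∈ range N, pidKernel a c zp zm (i + 1) ≤ 1 / (c * (1 - a * zp / c) ^ 2) := by
  have hr₀ : 0 ≤ a * zp / c := by have := hzm.trans hz.le; positivity
  have hr₁ : a * zp / c < 1 := (div_lt_one hc).mpr hlt
  calc ∑ i ∈ range N, pidKernel a c zp zm (i + 1)
      ≤ ∑ i ∈ range N, ((i : ℝ) + 1) * (a * zp / c) ^ i / c :=
        sum_le_sum fun i _ => pidKernel_succ_le ha hc hzm hz i
    _ = (∑ i ∈ range N, ((i : ℝ) + 1) * (a * zp / c) ^ i) / c := by rw [sum_div]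
    _ ≤ 1 / (1 - a * zp / c) ^ 2 / c := by gcongr; exact sum_range_succ_mul_pow_le hr₀ hr₁ N
    _ = 1 / (c * (1 - a * zp / c) ^ 2) := by rw [div_div, mul_comm]

theorem sum_range_pidKernel_le (ha : 0 < a) (hc : 0 < c) (hzm : 0 ≤ zm) (hz : zm < zp)
    (hlt : a * zp < c) (N : ℕ) :
    ∑ i ∈ range N, pidKernel a c zp zm i ≤ 1 / (c * (1 - a * zp / c) ^ 2) :=
  calc ∑ i ∈ range N, pidKernel a c zp zm i
      ≤ ∑ i ∈ range (N + 1), pidKernel a c zp zm i :=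
        sum_le_sum_of_subset_of_nonneg (range_subset_range.mpr N.le_succ)
          fun i _ _ => pidKernel_nonneg ha hc hzm hz i
    _ = ∑ i ∈ range N, pidKernel a c zp zm (i + 1) := by
        rw [sum_range_succ', pidKernel_zero, add_zero]
    _ ≤ 1 / (c * (1 - a * zp / c) ^ 2) := sum_range_pidKernel_succ_le ha hc hzm hz hlt N

theorem sum_abs_pidKernel_succ_sub_le {β : ℝ} (ha : 0 < a) (hc : 0 < c) (hβ : 0 ≤ β)
    (hzm : 0 ≤ zm) (hz : zm < zp) (hlt : a * zp < c) (N : ℕ) :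
    ∑ i ∈ range N, |pidKernel a c zp zm (i + 1) - β * pidKernel a c zp zm i| ≤
      (1 + β) / (c * (1 - a * zp / c) ^ 2) := by
  have hs := pidKernel_nonneg ha hc hzm hz
  calc ∑ i ∈ range N, |pidKernel a c zp zm (i + 1) - β * pidKernel a c zp zm i|
      ≤ ∑ i ∈ range N, (pidKernel a c zp zm (i + 1) + β * pidKernel a c zp zm i) :=
        sum_le_sum fun i _ => (abs_sub _ _).trans_eq <| by
          rw [abs_of_nonneg (hs _), abs_of_nonneg (mul_nonneg hβ (hs _))]
    _ = ∑ i ∈ range N, pidKernel a c zp zm (i + 1)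
          + β * ∑ i ∈ range N, pidKernel a c zp zm i := by
        rw [sum_add_distrib, mul_sum]
    _ ≤ 1 / (c * (1 - a * zp / c) ^ 2) + β * (1 / (c * (1 - a * zp / c) ^ 2)) := by
        gcongr
        · exact sum_range_pidKernel_succ_le ha hc hzm hz hlt N
        · exact sum_range_pidKernel_le ha hc hzm hz hlt N
    _ = (1 + β) / (c * (1 - a * zp / c) ^ 2) := by ring

end pidKernel

theorem pid_q_abs_partial_sum_bound_general (a c β : ℝ) (ha : 0 < a) (hc : 0 < c) (hβ : 0 ≤ β)
    (zp zm : ℝ) (hzm0 : 0 ≤ zm) (hroots : zm < zp)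
    (hprod : zp * zm = c / a)
    (hlt : a * zp < c)
    (q : ℕ → ℝ) (hq0 : q 0 = 1 / c)
    (hqi : ∀ i, 1 ≤ i → q i = (1 / (a * (zp - zm))) *
      ((a / c) ^ (i + 1) * (zp ^ (i + 1) - zm ^ (i + 1))
        - β * (a / c) ^ i * (zp ^ i - zm ^ i))) :
    ∀ N, 1 ≤ N →
      ∑ i ∈ Finset.range N, |q i| ≤
        1 / c + (1 + β) * zp / (c * (1 - a * zp / c) ^ 2) := by
  intro N _
  have hq : ∀ i, q i = pidKernel a c zp zm (i + 1) - β * pidKernel a c zp zm i := by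
    rintro (_ | i)
    · rw [hq0, zero_add, pidKernel_one ha.ne' hroots.ne', pidKernel_zero, mul_zero, sub_zero]
    · rw [hqi (i + 1) i.succ_pos, pidKernel, pidKernel]
      ring
  have hzp : 1 ≤ zp := by
    have hc' : c = a * zp * zm := by rw [mul_assoc, hprod, mul_div_cancel₀ _ ha.ne']
    nlinarith
  calc ∑ i ∈ range N, |q i|
      = ∑ i ∈ range N, |pidKernel a c zp zm (i + 1) - β * pidKernel a c zp zm i| := by
        simp only [hq]
    _ ≤ (1 + β) / (c * (1 - a * zp / c) ^ 2) :=
        sum_abs_pidKernel_succ_sub_le ha hc hβ hzm0 hroots hlt N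
    _ ≤ (1 + β) * zp / (c * (1 - a * zp / c) ^ 2) := by
        gcongr
        exact le_mul_of_one_le_right (by linarith) hzp
    _ ≤ 1 / c + (1 + β) * zp / (c * (1 - a * zp / c) ^ 2) :=
        le_add_of_nonneg_left (by positivity)

/-- Bound on the absolute partial sums of the convolution-inverse sequence `q` arising
in the PID controller analysis: if `a z₊ < c` then `∑_{i=0}^{N−1} |q_i| ≤
1/c + (1+β) z₊ / (c (1 − a z₊/c)²)`. -/
theorem pid_q_abs_partial_sum_bound (a c β : ℝ) (ha : 0 < a) (hc : 0 < c) (hβ : 0 ≤ β)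
    (b zp zm : ℝ) (hzm0 : 0 ≤ zm) (hroots : zm < zp)
    (hsum : zp + zm = b / a) (hprod : zp * zm = c / a)
    (hlt : a * zp < c)
    (q : ℕ → ℝ) (hq0 : q 0 = 1 / c)
    (hqi : ∀ i, 1 ≤ i → q i = (1 / (a * (zp - zm))) *
      ((a / c) ^ (i + 1) * (zp ^ (i + 1) - zm ^ (i + 1))
        - β * (a / c) ^ i * (zp ^ i - zm ^ i))) :
    ∀ N, 1 ≤ N →
      ∑ i ∈ Finset.range N, |q i| ≤
        1 / c + (1 + β) * zp / (c * (1 - a * zp / c) ^ 2) :=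
  pid_q_abs_partial_sum_bound_general a c β ha hc hβ zp zm hzm0 hroots hprod hlt q hq0 hqi
end

section
/- Let α_D > 0, α_I > 0 with α_D + α_I ≤ 1, and 0 < β < 1. Set a := α_D β, b := α_D + β(1−α_I), c := 1 − α_I β, and assume b² ≥ 4ac. Then the two real roots z_± := (b ± √(b² − 4ac))/(2a) of a z² − b z + c satisfy z_+ ≥ z_− ≥ 0 and a z_+ < c (equivalently, a z_+/c < 1). -/
/-- Properties of the roots of the characteristic quadratic `a z² − b z + c` of the
PID controller: under the real-roots condition `b² ≥ 4ac`, the roots satisfy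
`z₊ ≥ z₋ ≥ 0` and `a z₊ < c`. -/
theorem pid_roots_properties (αD αI β : ℝ) (hαD : 0 < αD) (hαI : 0 < αI)
    (hsum : αD + αI ≤ 1) (hβ0 : 0 < β) (hβ1 : β < 1)
    (a b c : ℝ) (ha : a = αD * β) (hb : b = αD + β * (1 - αI)) (hc : c = 1 - αI * β)
    (hdisc : b ^ 2 ≥ 4 * a * c)
    (zp zm : ℝ) (hzp : zp = (b + Real.sqrt (b ^ 2 - 4 * a * c)) / (2 * a))
    (hzm : zm = (b - Real.sqrt (b ^ 2 - 4 * a * c)) / (2 * a)) :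
    zm ≤ zp ∧ 0 ≤ zm ∧ a * zp < c := by
  have hαD1 : αD < 1 := by linarith
  have hαI1 : αI < 1 := by linarith
  have ha0 : 0 < a := by rw [ha]; positivity
  have hc0 : 0 < c := by nlinarith
  have hb0 : 0 < b := by nlinarith
  have hD0 : 0 ≤ b ^ 2 - 4 * a * c := by linarith
  have hsq := Real.sq_sqrt hD0
  have hsnn := Real.sqrt_nonneg (b ^ 2 - 4 * a * c)
  set s := Real.sqrt (b ^ 2 - 4 * a * c) with hs
  -- s ≤ b
  have hsb : s ≤ b := by nlinarith [sq_nonneg (s - b)]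
  -- (2c - b) > 0 and s < 2c - b
  have h2cb : 0 < 2 * c - b := by nlinarith
  have habc : a - b + c = (1 - αD) * (1 - β) := by rw [ha, hb, hc]; ring
  have hkey : 0 < 4 * c * (a - b + c) := by
    have h1 : 0 < 1 - αD := by linarith
    have h2 : 0 < 1 - β := by linarith
    rw [habc]; positivity
  have hslt : s < 2 * c - b := by nlinarith [sq_nonneg (s - (2 * c - b))]
  refine ⟨?_, ?_, ?_⟩
  · rw [hzp, hzm]
    gcongr
    linarith
  · rw [hzm]
    exact div_nonneg (by linarith) (by linarith)
  · rw [hzp, mul_div_assoc', div_lt_iff₀ (by linarith)]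
    nlinarith
end

section
/- (Algebraic equivalence of the PID update and CMD weights.) Let K_P, K_I, K_D ≥ 0 and β ∈ [0,1) with η := K_P + K_I/(1−β) + K_D > 0. Define α_I := K_I/(η(1−β)), α_D := K_D/η, and the weights λ_0 := 1 − α_I + α_I(1−β), λ_1 := −α_D + α_I(1−β)β, λ_i := α_I(1−β)β^i for i ≥ 2. Then for every sequence g_1, g_2, … in ℝ^m (with the convention g_0 := 0) and every t ≥ 1: η ∑_{s=1}^t λ_{t−s} g_s = K_P g_t + K_I ∑_{s=0}^{t−1} β^s g_{t−s} + K_D (g_t − g_{t−1}). -/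
/-- (Algebraic equivalence of the PID update and CMD weights.)
The CMD step `η z_t = η ∑_{s=1}^t λ_{t−s} g_s` with the PID-induced weights
equals the PID controller step `K_P g_t + K_I ∑_{s=0}^{t−1} β^s g_{t−s} + K_D (g_t − g_{t−1})`. -/
theorem pid_cmd_weights_equiv (m : ℕ)
    (KP KI KD β : ℝ) (hKP : 0 ≤ KP) (hKI : 0 ≤ KI) (hKD : 0 ≤ KD)
    (hβ0 : 0 ≤ β) (hβ1 : β < 1)
    (η : ℝ) (hη : η = KP + KI / (1 - β) + KD) (hηpos : 0 < η)
    (αI αD : ℝ) (hαI : αI = KI / (η * (1 - β))) (hαD : αD = KD / η)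
    (lam : ℕ → ℝ)
    (hlam0 : lam 0 = 1 - αI + αI * (1 - β))
    (hlam1 : lam 1 = -αD + αI * (1 - β) * β)
    (hlam : ∀ i, 2 ≤ i → lam i = αI * (1 - β) * β ^ i)
    (g : ℕ → Fin m → ℝ) (hg0 : g 0 = 0) :
    ∀ t, 1 ≤ t →
      η • (∑ s ∈ Finset.Icc 1 t, lam (t - s) • g s) =
        KP • g t + KI • (∑ s ∈ Finset.range t, β ^ s • g (t - s))
          + KD • (g t - g (t - 1)) := by
  intro t ht
  have hβ : (1:ℝ) - β ≠ 0 := by linarith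
  have hηne : η ≠ 0 := ne_of_gt hηpos
  have e : η * αI = KI / (1 - β) := by rw [hαI]; field_simp
  have eD : η * αD = KD := by rw [hαD]; field_simp
  have hC : KI / (1 - β) * (1 - β) = KI := div_mul_cancel₀ KI hβ
  have h0 : η * lam 0 = KP + KI + KD := by
    rw [hlam0]; linear_combination hη + (-β) * e + hC
  have h1 : η * lam 1 = KI * β - KD := by
    rw [hlam1]; linear_combination (1 - β) * β * e - eD + β * hC
  have h2 : ∀ i, 2 ≤ i → η * lam i = KI * β ^ i := by
    intro i hi; rw [hlam i hi]; linear_combination (1 - β) * β ^ i * e + β ^ i * hC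
  -- reindex the sum
  have hre : ∑ s ∈ Finset.Icc 1 t, lam (t - s) • g s
      = ∑ i ∈ Finset.range t, lam i • g (t - i) := by
    apply Finset.sum_nbij' (fun s => t - s) (fun i => t - i)
    · intro a ha; simp only [Finset.mem_Icc] at ha; simp only [Finset.mem_range]; omega
    · intro a ha; simp only [Finset.mem_range] at ha; simp only [Finset.mem_Icc]; omega
    · intro a ha; simp only [Finset.mem_Icc] at ha; omega
    · intro a ha; simp only [Finset.mem_range] at ha; omega
    · intro a ha; simp only [Finset.mem_Icc] at ha
      have : t - (t - a) = a := by omega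
      rw [this]
  have key : ∀ i ∈ Finset.range t, (η * lam i) • g (t - i)
      = KI • (β ^ i • g (t - i))
        + ((if i = 0 then (KP + KD) • g t else 0)
          + (if i = 1 then -(KD • g (t - 1)) else 0)) := by
    intro i hi
    match i with
    | 0 =>
      have e1 : (if (0:ℕ) = 0 then (KP + KD) • g t else 0) = (KP + KD) • g t := if_pos rfl
      have e2 : (if (0:ℕ) = 1 then -(KD • g (t - 1)) else (0 : Fin m → ℝ)) = 0 :=
        if_neg (by omega)
      rw [h0, e1, e2, Nat.sub_zero, pow_zero]
      module
    | 1 =>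
      have e1 : (if (1:ℕ) = 0 then (KP + KD) • g t else (0 : Fin m → ℝ)) = 0 :=
        if_neg (by omega)
      have e2 : (if (1:ℕ) = 1 then -(KD • g (t - 1)) else (0 : Fin m → ℝ))
          = -(KD • g (t - 1)) := if_pos rfl
      rw [h1, e1, e2, pow_one]
      module
    | (n+2) =>
      have e1 : (if n + 2 = 0 then (KP + KD) • g t else (0 : Fin m → ℝ)) = 0 :=
        if_neg (by omega)
      have e2 : (if n + 2 = 1 then -(KD • g (t - 1)) else (0 : Fin m → ℝ)) = 0 :=
        if_neg (by omega)
      rw [h2 (n+2) (by omega), e1, e2]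
      module
  rw [hre, Finset.smul_sum]
  have hs : ∀ i ∈ Finset.range t, η • (lam i • g (t - i)) = (η * lam i) • g (t - i) := by
    intro i _; rw [smul_smul]
  rw [Finset.sum_congr rfl hs, Finset.sum_congr rfl key]
  rw [Finset.sum_add_distrib, Finset.sum_add_distrib]
  rw [Finset.sum_ite_eq' (Finset.range t) 0 (fun _ => (KP + KD) • g t)]
  rw [Finset.sum_ite_eq' (Finset.range t) 1 (fun _ => -(KD • g (t - 1)))]
  rw [if_pos (Finset.mem_range.mpr (by omega)), ← Finset.smul_sum]
  rcases Nat.lt_or_ge t 2 with h | h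
  · have ht1 : t = 1 := by omega
    rw [if_neg (by rw [Finset.mem_range, ht1]; omega)]
    subst ht1
    simp only [Nat.sub_self, hg0, smul_zero, sub_zero, add_zero]
    module
  · rw [if_pos (Finset.mem_range.mpr (by omega))]
    module
end

section
/- (Optimal bid in a second-price auction under a dual multiplier.) Let v ≥ 0, d ≥ 0, and μ ≥ 0 be real numbers, and define u(x) := (v − (1+μ)d) · 𝟙[x ≥ d] for x ≥ 0, the Lagrangian-adjusted utility of bidding x: utility (v − d)𝟙[x ≥ d] minus μ times the payment d·𝟙[x ≥ d]. Then the bid x* := v/(1+μ) is optimal: u(x) ≤ u(x*) for all x ≥ 0. -/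
/-- (Optimal bid in a second-price auction under a dual multiplier.)
For value `v ≥ 0`, highest competing bid `d ≥ 0`, and multiplier `μ ≥ 0`, the bid
`x* = v/(1+μ)` maximizes the Lagrangian-adjusted utility
`u(x) = (v − (1+μ)d)·𝟙[x ≥ d]` over all bids `x ≥ 0`. -/
theorem optimal_bid_second_price (v d μ : ℝ) (hv : 0 ≤ v) (hd : 0 ≤ d) (hμ : 0 ≤ μ)
    (u : ℝ → ℝ)
    (hu : ∀ x, u x = (v - (1 + μ) * d) * (if d ≤ x then 1 else 0)) :
    ∀ x, 0 ≤ x → u x ≤ u (v / (1 + μ)) := by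
  intro x hx
  have hpos : (0:ℝ) < 1 + μ := by linarith
  rw [hu, hu]
  rcases le_or_gt ((1 + μ) * d) v with h | h
  · have hdx : d ≤ v / (1 + μ) := by
      rw [le_div_iff₀ hpos]; linarith [mul_comm d (1 + μ)]
    rw [if_pos hdx]
    by_cases h2 : d ≤ x <;> simp [h2] <;> linarith
  · have hdx : ¬ d ≤ v / (1 + μ) := by
      rw [not_le, div_lt_iff₀ hpos]; linarith [mul_comm d (1 + μ)]
    rw [if_neg hdx]
    by_cases h2 : d ≤ x <;> simp [h2] <;> nlinarith
end

section
/- (Boundedness of the dual iterates of the PID controller.) Fix m, d ∈ ℕ, ρ ∈ ℝ^m with ρ_j > 0 for all j, bounds f̄ ≥ 0 and b̄ ≥ 0, parameters α_P, α_I, α_D ≥ 0 with α_P + α_I + α_D = 1, β ∈ (0,1), η > 0, and σ > 0. For each j let h_j : ℝ → ℝ be differentiable and σ-strongly convex. For each t ≥ 1 let X_t ⊆ ℝ^d be a set with 0 ∈ X_t, and let f_t : X_t → ℝ and b_t : X_t → ℝ^m satisfy f_t(0) = 0, b_t(0) = 0, 0 ≤ f_t(x) ≤ f̄, and 0 ≤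 b_{t,j}(x) ≤ b̄ for all x ∈ X_t and all j. Define iterates: μ_1 ∈ ℝ^m with 0 ≤ μ_{1,j} ≤ f̄/ρ_j; for each t ≥ 1, x_t is either 0 or a maximizer of x ↦ f_t(x) − μ_t^⊤ b_t(x) over X_t; g_t := ρ − b_t(x_t) (with the convention g_0 := 0); e_t := (1−β) ∑_{s=1}^t β^{t−s} g_s; z_t := α_P g_t + α_I e_t + α_D (g_t − g_{t−1}); μ̃_{t,j} is the unique real with h_j'(μ̃_{t,j}) = h_j'(μ_{t,j}) − η z_{t,j}; and μ_{t+1,j} := max(μ̃_{t,j}, 0). Assume additionally z_1 = 0. Then for every t ≥ 1 and every j: μ_{t,j} ≤ f̄/ρ_j + 4η(b̄ + ρ_j)/(σ(1−β)). -/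
private lemma pid_aux_scalar (αP αI αD β Q : ℝ) (hαP : 0 ≤ αP) (hαI : 0 ≤ αI)
    (hαD : 0 ≤ αD) (hα : αP + αI + αD = 1) (hβ0 : 0 ≤ β) (hQ : 0 ≤ Q) :
    -(2 * Q) ≤ αP * (-(Q * (1 - β))) + αI * (-Q) + αD * (-(2 * (Q * (1 - β)))) := by
  nlinarith [mul_nonneg (mul_nonneg hQ hβ0) hαP, mul_nonneg (mul_nonneg hQ hβ0) hαD,
    mul_nonneg hQ (show 0 ≤ 1 - αD by linarith)]

set_option maxHeartbeats 1600000 in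
/-- (Boundedness of the dual iterates of the PID controller.) Along the run of the
dual-based PID controller for online allocation with separable `σ`-strongly-convex
reference function, target consumptions `ρ_j > 0`, reward bound `f̄`, consumption
bound `b̄`, weights `α_P + α_I + α_D = 1`, averaging parameter `β ∈ (0,1)`, step-size
`η > 0`, initial duals `μ_{1,j} ≤ f̄/ρ_j`, and `z_1 = 0`, every dual iterate satisfies
`μ_{t,j} ≤ f̄/ρ_j + 4η(b̄ + ρ_j)/(σ(1−β))`. -/
theorem pid_dual_iterates_bounded (m d : ℕ)
    (ρ : Fin m → ℝ) (hρ : ∀ j, 0 < ρ j)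
    (fbar bbar : ℝ) (hfbar : 0 ≤ fbar) (hbbar : 0 ≤ bbar)
    (αP αI αD : ℝ) (hαP : 0 ≤ αP) (hαI : 0 ≤ αI) (hαD : 0 ≤ αD)
    (hα : αP + αI + αD = 1)
    (β : ℝ) (hβ0 : 0 < β) (hβ1 : β < 1)
    (η : ℝ) (hη : 0 < η) (σ : ℝ) (hσ : 0 < σ)
    (h : Fin m → ℝ → ℝ)
    (hdiff : ∀ j, Differentiable ℝ (h j))
    (hstrong : ∀ j, ∀ u v : ℝ,
      h j v + deriv (h j) v * (u - v) + σ / 2 * (u - v) ^ 2 ≤ h j u)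
    (X : ℕ → Set (Fin d → ℝ)) (hX0 : ∀ t, 1 ≤ t → (0 : Fin d → ℝ) ∈ X t)
    (f : ℕ → (Fin d → ℝ) → ℝ)
    (b : ℕ → (Fin d → ℝ) → (Fin m → ℝ))
    (hf0 : ∀ t, 1 ≤ t → f t 0 = 0)
    (hb0 : ∀ t, 1 ≤ t → b t 0 = 0)
    (hfbd : ∀ t, 1 ≤ t → ∀ x ∈ X t, 0 ≤ f t x ∧ f t x ≤ fbar)
    (hbbd : ∀ t, 1 ≤ t → ∀ x ∈ X t, ∀ j, 0 ≤ b t x j ∧ b t x j ≤ bbar)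
    (μ μtilde : ℕ → Fin m → ℝ)
    (x : ℕ → Fin d → ℝ)
    (g e z : ℕ → Fin m → ℝ)
    (hμ1 : ∀ j, 0 ≤ μ 1 j ∧ μ 1 j ≤ fbar / ρ j)
    (hx : ∀ t, 1 ≤ t →
      x t = 0 ∨ (x t ∈ X t ∧ ∀ y ∈ X t,
        f t y - ∑ j, μ t j * b t y j ≤ f t (x t) - ∑ j, μ t j * b t (x t) j))
    (hg0 : g 0 = 0)
    (hg : ∀ t, 1 ≤ t → g t = ρ - b t (x t))
    (he : ∀ t, 1 ≤ t →
      e t = (1 - β) • ∑ s ∈ Finset.Icc 1 t, β ^ (t - s) • g s)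
    (hzdef : ∀ t, 1 ≤ t → z t = αP • g t + αI • e t + αD • (g t - g (t - 1)))
    (htilde : ∀ t, 1 ≤ t → ∀ j,
      deriv (h j) (μtilde t j) = deriv (h j) (μ t j) - η * z t j)
    (hnext : ∀ t, 1 ≤ t → ∀ j, μ (t + 1) j = max (μtilde t j) 0)
    (hz1 : z 1 = 0) :
    ∀ t, 1 ≤ t → ∀ j,
      μ t j ≤ fbar / ρ j + 4 * η * (bbar + ρ j) / (σ * (1 - β)) := by
  classical
  -- μ is componentwise nonnegative
  have hμnonneg : ∀ t, 1 ≤ t → ∀ i, 0 ≤ μ t i := by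
    intro t
    induction t with
    | zero => intro ht; omega
    | succ n _ =>
      intro _ i
      rcases Nat.lt_or_ge 1 (n + 1) with h1 | h1
      · have hn : 1 ≤ n := by omega
        rw [hnext n hn i]; exact le_max_right _ _
      · have : n = 0 := by omega
        subst this; exact (hμ1 i).1
  -- strong monotonicity of the derivative
  have hmono : ∀ jj : Fin m, ∀ u v : ℝ,
      σ * (u - v) ^ 2 ≤ (deriv (h jj) u - deriv (h jj) v) * (u - v) := by
    intro jj u v
    have h1 := hstrong jj u v
    have h2 := hstrong jj v u
    nlinarith [h1, h2]
  -- bounds on g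
  have hgbd : ∀ t, 1 ≤ t → ∀ i, -bbar ≤ g t i ∧ g t i ≤ ρ i := by
    intro t ht i
    have hgi : g t i = ρ i - b t (x t) i := by rw [hg t ht]; simp
    rcases hx t ht with h0 | ⟨hxmem, _⟩
    · rw [hgi, h0, hb0 t ht]
      constructor
      · simp; linarith [(hρ i).le]
      · simp
    · have hb := hbbd t ht (x t) hxmem i
      constructor
      · rw [hgi]; linarith [hb.2, (hρ i).le]
      · rw [hgi]; linarith [hb.1]
  -- if μ t i is above fbar / ρ i then g t i ≥ 0
  have hgpos : ∀ t, 1 ≤ t → ∀ i, fbar / ρ i < μ t i → 0 ≤ g t i := by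
    intro t ht i hbig
    have hρi := hρ i
    have hμpos : 0 < μ t i := lt_of_le_of_lt (div_nonneg hfbar hρi.le) hbig
    have hgi : g t i = ρ i - b t (x t) i := by rw [hg t ht]; simp
    rcases hx t ht with h0 | ⟨hxmem, hmax⟩
    · rw [hgi, h0, hb0 t ht]; simp; linarith
    · have h00 := hmax 0 (hX0 t ht)
      rw [hf0 t ht, hb0 t ht] at h00
      simp only [Pi.zero_apply, mul_zero, Finset.sum_const_zero, sub_zero] at h00
      have hsum_le : ∑ j', μ t j' * b t (x t) j' ≤ fbar := by
        have := (hfbd t ht (x t) hxmem).2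
        linarith
      have hterm : μ t i * b t (x t) i ≤ ∑ j', μ t j' * b t (x t) j' :=
        Finset.single_le_sum
          (fun k _ => mul_nonneg (hμnonneg t ht k) (hbbd t ht (x t) hxmem k).1)
          (Finset.mem_univ i)
      have hfρ : fbar < μ t i * ρ i := by
        rw [div_lt_iff₀ hρi] at hbig
        linarith
      have hbi : b t (x t) i < ρ i := by
        have hlt : μ t i * b t (x t) i < μ t i * ρ i :=
          lt_of_le_of_lt (le_trans hterm hsum_le) hfρ
        exact lt_of_mul_lt_mul_left hlt hμpos.le
      rw [hgi]; linarith
  -- now fix t and j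
  intro T hT j
  have hρj := hρ j
  obtain ⟨G, hGdef⟩ : ∃ G : ℝ, G = bbar + ρ j := ⟨_, rfl⟩
  rw [show bbar + ρ j = G from hGdef.symm]
  have hGpos : 0 < G := by rw [hGdef]; positivity
  have h1β : 0 < 1 - β := by linarith
  have htail : 0 ≤ 4 * η * G / (σ * (1 - β)) := by rw [hGdef]; positivity
  by_cases hcase : μ T j ≤ fbar / ρ j
  · linarith
  push_neg at hcase
  -- last time τ ≤ T at which μ was below fbar / ρ j
  set P : ℕ → Prop := fun s => μ s j ≤ fbar / ρ j with hPdef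
  have hP1 : P 1 := (hμ1 j).2
  set τ := Nat.findGreatest P T with hτdef
  have h1τ : 1 ≤ τ := Nat.le_findGreatest hT hP1
  have hτT : τ ≤ T := Nat.findGreatest_le T
  have hPτ : μ τ j ≤ fbar / ρ j := Nat.findGreatest_spec hT hP1
  have hhigh : ∀ s, τ < s → s ≤ T → fbar / ρ j < μ s j := by
    intro s hs1 hs2
    by_contra hcon
    push_neg at hcon
    exact Nat.findGreatest_is_greatest hs1 hs2 hcon
  have hτltT : τ < T := by
    rcases eq_or_lt_of_le hτT with heq | hlt
    · exfalso; rw [heq] at hPτ; linarith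
    · exact hlt
  have hgpos' : ∀ s, τ < s → s ≤ T → 0 ≤ g s j :=
    fun s hs1 hs2 => hgpos s (by omega) j (hhigh s hs1 hs2)
  have hglb : ∀ s, 1 ≤ s → -G ≤ g s j := by
    intro s hs
    have := (hgbd s hs j).1
    rw [hGdef]; linarith [hρj.le]
  have hgub : ∀ s, 1 ≤ s → g s j ≤ G := by
    intro s hs
    have := (hgbd s hs j).2
    rw [hGdef]; linarith
  -- one-step identity for the transformed iterates while μ stays positive
  obtain ⟨D, hDdef⟩ : ∃ D : ℝ → ℝ, D = deriv (h j) := ⟨_, rfl⟩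
  have hstep : ∀ s, τ ≤ s → s < T → D (μ (s + 1) j) = D (μ s j) - η * z s j := by
    intro s hs1 hs2
    have hs1' : 1 ≤ s := le_trans h1τ hs1
    have hμpos : 0 < μ (s + 1) j :=
      lt_of_le_of_lt (div_nonneg hfbar hρj.le) (hhigh (s + 1) (by omega) (by omega))
    have heq : μ (s + 1) j = μtilde s j := by
      rw [hnext s hs1' j] at hμpos ⊢
      rcases le_or_gt (μtilde s j) 0 with hle | hlt
      · rw [max_eq_right hle] at hμpos; linarith
      · rw [max_eq_left hlt.le]
    rw [heq, hDdef]
    exact htilde s hs1' j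
  set n := T - τ with hndef
  have hn1 : 1 ≤ n := by omega
  have htel : ∀ k, k ≤ n →
      D (μ (τ + k) j) = D (μ τ j) - η * ∑ i ∈ Finset.range k, z (τ + i) j := by
    intro k
    induction k with
    | zero => intro _; simp
    | succ k ih =>
      intro hk
      have hk' : k ≤ n := by omega
      have hTk : τ + k < T := by omega
      have := hstep (τ + k) (by omega) hTk
      rw [show τ + (k + 1) = (τ + k) + 1 by ring, this, ih hk', Finset.sum_range_succ]
      ring
  -- pointwise evaluation of e and z
  have heval : ∀ t, 1 ≤ t →
      e t j = (1 - β) * ∑ s ∈ Finset.Icc 1 t, β ^ (t - s) * g s j := by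
    intro t ht
    have := congrFun (he t ht) j
    simpa [Finset.sum_apply, Pi.smul_apply, smul_eq_mul] using this
  have hzeval : ∀ t, 1 ≤ t →
      z t j = αP * g t j + αI * e t j + αD * (g t j - g (t - 1) j) := by
    intro t ht
    have := congrFun (hzdef t ht) j
    simpa [Pi.add_apply, Pi.smul_apply, Pi.sub_apply, smul_eq_mul] using this
  -- geometric sum bound
  have hβ0' : (0 : ℝ) ≤ β := hβ0.le
  have hgeom : ∀ N : ℕ, ∑ i ∈ Finset.range N, β ^ i ≤ 1 / (1 - β) := by
    intro N
    have h1 : ∑ i ∈ Finset.range N, β ^ i = (1 - β ^ N) / (1 - β) := by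
      rw [geom_sum_eq (by linarith : β ≠ 1)]
      rw [show β ^ N - 1 = -(1 - β ^ N) by ring, show β - 1 = -(1 - β) by ring,
        neg_div_neg_eq]
    rw [h1, div_le_div_iff₀ h1β h1β]
    nlinarith [pow_nonneg hβ0' N]
  -- lower bound on e s j for s in [τ, T)
  have helb : ∀ s, τ ≤ s → s < T → -(G * β ^ (s - τ)) ≤ e s j := by
    intro s hsτ hsT
    have hs1 : 1 ≤ s := le_trans h1τ hsτ
    rw [heval s hs1]
    have hdisj : Disjoint (Finset.Icc 1 τ) (Finset.Ioc τ s) := by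
      rw [Finset.disjoint_left]
      intro a ha hb
      rw [Finset.mem_Icc] at ha
      rw [Finset.mem_Ioc] at hb
      omega
    have hsplit : Finset.Icc 1 s = Finset.Icc 1 τ ∪ Finset.Ioc τ s := by
      ext r
      simp only [Finset.mem_Icc, Finset.mem_union, Finset.mem_Ioc]
      omega
    rw [hsplit, Finset.sum_union hdisj]
    have hsum2 : 0 ≤ ∑ r ∈ Finset.Ioc τ s, β ^ (s - r) * g r j := by
      apply Finset.sum_nonneg
      intro r hr
      rw [Finset.mem_Ioc] at hr
      exact mul_nonneg (pow_nonneg hβ0' _) (hgpos' r hr.1 (by omega))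
    have h3 : ∑ r ∈ Finset.Icc 1 τ, β ^ (s - r) ≤ β ^ (s - τ) / (1 - β) := by
      have h4 : ∀ r ∈ Finset.Icc 1 τ, β ^ (s - r) = β ^ (s - τ) * β ^ (τ - r) := by
        intro r hr
        rw [Finset.mem_Icc] at hr
        rw [← pow_add]
        congr 1
        omega
      rw [Finset.sum_congr rfl h4, ← Finset.mul_sum]
      have h6 : ∑ r ∈ Finset.Icc 1 τ, β ^ (τ - r) = ∑ i ∈ Finset.range τ, β ^ i := by
        rw [show Finset.Icc 1 τ = Finset.Ico 1 (τ + 1) by rw [Finset.Ico_add_one_right_eq_Icc],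
          Finset.sum_Ico_eq_sum_range]
        simp only [Nat.add_sub_cancel]
        calc ∑ i ∈ Finset.range τ, β ^ (τ - (1 + i))
            = ∑ i ∈ Finset.range τ, β ^ (τ - 1 - i) := by
              apply Finset.sum_congr rfl
              intro i _
              congr 1
              omega
          _ = ∑ i ∈ Finset.range τ, β ^ i := Finset.sum_range_reflect (fun i => β ^ i) τ
      rw [h6]
      calc β ^ (s - τ) * ∑ i ∈ Finset.range τ, β ^ i
          ≤ β ^ (s - τ) * (1 / (1 - β)) :=
            mul_le_mul_of_nonneg_left (hgeom τ) (pow_nonneg hβ0' _)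
        _ = β ^ (s - τ) / (1 - β) := by ring
    have hsum1 : -(G * β ^ (s - τ) / (1 - β)) ≤ ∑ r ∈ Finset.Icc 1 τ, β ^ (s - r) * g r j := by
      have h1 : ∑ r ∈ Finset.Icc 1 τ, β ^ (s - r) * (-G)
          ≤ ∑ r ∈ Finset.Icc 1 τ, β ^ (s - r) * g r j := by
        apply Finset.sum_le_sum
        intro r hr
        rw [Finset.mem_Icc] at hr
        exact mul_le_mul_of_nonneg_left (hglb r hr.1) (pow_nonneg hβ0' _)
      have h2 : ∑ r ∈ Finset.Icc 1 τ, β ^ (s - r) * (-G)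
          = -(G * ∑ r ∈ Finset.Icc 1 τ, β ^ (s - r)) := by
        rw [← Finset.sum_mul]
        ring
      have h5 := mul_le_mul_of_nonneg_left h3 hGpos.le
      have h7 : -(G * β ^ (s - τ) / (1 - β)) ≤ -(G * ∑ r ∈ Finset.Icc 1 τ, β ^ (s - r)) := by
        have : G * ∑ r ∈ Finset.Icc 1 τ, β ^ (s - r) ≤ G * (β ^ (s - τ) / (1 - β)) := h5
        have heq2 : G * (β ^ (s - τ) / (1 - β)) = G * β ^ (s - τ) / (1 - β) := by ring
        linarith
      linarith [h1, h2.symm.le, h2.le]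
    have hcomb : -(G * β ^ (s - τ) / (1 - β))
        ≤ (∑ r ∈ Finset.Icc 1 τ, β ^ (s - r) * g r j)
          + ∑ r ∈ Finset.Ioc τ s, β ^ (s - r) * g r j := by linarith
    have hmul := mul_le_mul_of_nonneg_left hcomb h1β.le
    have heq3 : (1 - β) * (-(G * β ^ (s - τ) / (1 - β))) = -(G * β ^ (s - τ)) := by
      field_simp
    linarith
  -- decompose the sum of z
  have hzsum : ∑ i ∈ Finset.range n, z (τ + i) j
      = αP * (∑ i ∈ Finset.range n, g (τ + i) j)
        + αI * (∑ i ∈ Finset.range n, e (τ + i) j)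
        + αD * (g (τ + n - 1) j - g (τ - 1) j) := by
    have hz' : ∀ i ∈ Finset.range n, z (τ + i) j
        = αP * g (τ + i) j + αI * e (τ + i) j
          + αD * ((fun k => g (τ + k - 1) j) (i + 1) - (fun k => g (τ + k - 1) j) i) := by
      intro i _
      have h1 : 1 ≤ τ + i := by omega
      rw [hzeval (τ + i) h1]
      have e1 : τ + (i + 1) - 1 = τ + i := by omega
      simp only [e1]
    rw [Finset.sum_congr rfl hz', Finset.sum_add_distrib, Finset.sum_add_distrib,
      ← Finset.mul_sum, ← Finset.mul_sum, ← Finset.mul_sum,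
      Finset.sum_range_sub (fun k => g (τ + k - 1) j) n]
    simp
  -- bound the three pieces
  have hSg : -G ≤ ∑ i ∈ Finset.range n, g (τ + i) j := by
    have h1 : ∀ i ∈ Finset.range n, (if i = 0 then -G else 0) ≤ g (τ + i) j := by
      intro i hi
      rw [Finset.mem_range] at hi
      rcases Nat.eq_zero_or_pos i with h0 | h0
      · subst h0
        simpa using hglb τ h1τ
      · rw [if_neg (by omega)]
        exact hgpos' (τ + i) (by omega) (by omega)
    have h2 := Finset.sum_le_sum h1
    have h3 : ∑ i ∈ Finset.range n, (if i = 0 then -G else 0) = -G := by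
      rw [Finset.sum_eq_single_of_mem 0 (Finset.mem_range.mpr (by omega))]
      · simp
      · intro c _ hc; rw [if_neg hc]
    linarith
  have hSe : -(G / (1 - β)) ≤ ∑ i ∈ Finset.range n, e (τ + i) j := by
    have h1 : ∀ i ∈ Finset.range n, -G * β ^ i ≤ e (τ + i) j := by
      intro i hi
      rw [Finset.mem_range] at hi
      have := helb (τ + i) (by omega) (by omega)
      have e1 : τ + i - τ = i := by omega
      rw [e1] at this
      linarith
    have h2 := Finset.sum_le_sum h1
    rw [← Finset.mul_sum] at h2
    have h4 : 0 ≤ G * (1 / (1 - β) - ∑ i ∈ Finset.range n, β ^ i) :=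
      mul_nonneg hGpos.le (by linarith [hgeom n])
    have h5 : G * (1 / (1 - β)) = G / (1 - β) := by ring
    nlinarith [h2, h4, h5]
  have hgT' : -G ≤ g (τ + n - 1) j := hglb _ (by omega)
  have hgτ1 : g (τ - 1) j ≤ G := by
    rcases Nat.lt_or_ge 1 τ with h1 | h1
    · exact hgub _ (by omega)
    · have : τ - 1 = 0 := by omega
      rw [this]
      have : g 0 j = 0 := by rw [hg0]; simp
      rw [this]
      exact hGpos.le
  -- total lower bound on the z-sum
  have hSz : -(2 * G / (1 - β)) ≤ ∑ i ∈ Finset.range n, z (τ + i) j := by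
    rw [hzsum]
    have t1 : αP * (-G) ≤ αP * (∑ i ∈ Finset.range n, g (τ + i) j) :=
      mul_le_mul_of_nonneg_left hSg hαP
    have t2 : αI * (-(G / (1 - β))) ≤ αI * (∑ i ∈ Finset.range n, e (τ + i) j) :=
      mul_le_mul_of_nonneg_left hSe hαI
    have t3 : αD * (-(2 * G)) ≤ αD * (g (τ + n - 1) j - g (τ - 1) j) :=
      mul_le_mul_of_nonneg_left (by linarith) hαD
    have hQG : G / (1 - β) * (1 - β) = G := by field_simp
    have hQ0 : 0 ≤ G / (1 - β) := by positivity
    have hQ2 : 2 * G / (1 - β) = 2 * (G / (1 - β)) := by ring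
    have hscalar := pid_aux_scalar αP αI αD β (G / (1 - β)) hαP hαI hαD hα hβ0' hQ0
    rw [hQG] at hscalar
    linarith [t1, t2, t3, hscalar, hQ2]
  -- conclude
  have hteln := htel n le_rfl
  rw [show τ + n = T by omega] at hteln
  have hνdiff : D (μ T j) - D (μ τ j) ≤ 2 * η * G / (1 - β) := by
    rw [hteln]
    have hmulz := mul_le_mul_of_nonneg_left hSz hη.le
    have heq4 : η * (-(2 * G / (1 - β))) = -(2 * η * G / (1 - β)) := by ring
    linarith
  rcases le_or_gt (μ T j) (μ τ j) with hle | hlt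
  · linarith
  · have hm := hmono j (μ T j) (μ τ j)
    rw [← hDdef] at hm
    have hpos : 0 < μ T j - μ τ j := by linarith
    have hDD : σ * (μ T j - μ τ j) ≤ D (μ T j) - D (μ τ j) := by
      have h1 : σ * (μ T j - μ τ j) * (μ T j - μ τ j)
          ≤ (D (μ T j) - D (μ τ j)) * (μ T j - μ τ j) := by
        have h2 : σ * (μ T j - μ τ j) ^ 2
            = σ * (μ T j - μ τ j) * (μ T j - μ τ j) := by ring
        linarith [hm]
      exact le_of_mul_le_mul_right h1 hpos
    have hσβ : 0 < σ * (1 - β) := mul_pos hσ h1β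
    have hR2 : μ T j - μ τ j ≤ 2 * η * G / (σ * (1 - β)) := by
      rw [le_div_iff₀ hσβ]
      have h6 : 2 * η * G / (1 - β) * (1 - β) = 2 * η * G := by field_simp
      nlinarith [mul_le_mul_of_nonneg_right (le_trans hDD hνdiff) h1β.le, h6]
    have hR3 : 4 * η * G / (σ * (1 - β)) = 2 * (2 * η * G / (σ * (1 - β))) := by ring
    have hR4 : 0 ≤ 2 * η * G / (σ * (1 - β)) := by positivity
    linarith
end
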